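/- arXiv:1507.06843 — 8 statements merged into one kernel-verified Lean document; each statement's English description precedes it below -/
import Mathlib

section
/- Let L ⊆ S_n be a linear subspace and c ∈ S_n. The problem (K_n,L,c) is weakly feasible, i.e. (L+c) ∩ int(K_n) = ∅ but (L+c) ∩ K_n ≠ ∅, if and only if both of the following hold: (i) there exists x ∈ L+c that is positive semidefinite, and (ii) there exists a nonzero y ∈ L^⊥ ∩ K_n with ⟨y,c⟩ = 0. -/
/-!
If `y ≠ 0` is positive semidefinite then `⟨y, x⟩ > 0` for every positive definite `x`, so a
`y ⊥ L` with `⟨y, c⟩ = 0` keeps `L + c` away from the interior of the cone. Conversely, if the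
affine space `L + c` misses the open convex cone of positive definite matrices, Hahn–Banach gives
a functional that vanishes on `L`, is `≤ 0` on the semidefinite cone and `≥ 0` at `c`. Written as
a trace pairing with a symmetric matrix, its negative is a nonzero semidefinite `y ⊥ L` with
`⟨y, c⟩ ≤ 0`, and a semidefinite point of `L + c` forces `⟨y, c⟩ ≥ 0`.
-/

open Matrix

attribute [local instance] Matrix.frobeniusNormedAddCommGroup

noncomputable section

abbrev MS (n : ℕ) := Matrix (Fin n) (Fin n) ℝ

section LinearOrderedField

variable {𝕜 : Type*} [Field 𝕜] [LinearOrder 𝕜] [IsStrictOrderedRing 𝕜] {a b u : 𝕜}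

theorem eq_zero_of_forall_le_add_mul (h : ∀ s, u ≤ a + s * b) : b = 0 := by
  by_contra hb
  have := h ((u - a - 1) / b)
  rw [div_mul_cancel₀ _ hb] at this
  linarith

theorem nonpos_of_forall_pos_add_mul_lt (h : ∀ s > 0, a + s * b < u) : b ≤ 0 := by
  by_contra! hb
  have := h ((|u - a| + 1) / b) (by positivity)
  rw [div_mul_cancel₀ _ hb.ne'] at this
  linarith [le_abs_self (u - a)]

theorem nonneg_of_forall_pos_mul_lt (h : ∀ s > 0, s * b < u) : 0 ≤ u := by
  by_contra! hu
  have hb : b < 0 := by simpa using (h 1 one_pos).trans hu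
  have := h (u / b) (div_pos_of_neg_of_neg hu hb)
  rw [div_mul_cancel₀ _ hb.ne] at this
  exact this.false

end LinearOrderedField

namespace Matrix

variable {ι : Type*} [Fintype ι]

theorem trace_mul_vecMulVec {R : Type*} [CommSemiring R] (x : Matrix ι ι R) (v w : ι → R) :
    (x * vecMulVec v w).trace = w ⬝ᵥ x *ᵥ v := by
  rw [mul_vecMulVec, trace_vecMulVec, dotProduct_comm]

section RCLike

open scoped ComplexOrder

variable {𝕜 : Type*} [RCLike 𝕜] {x y : Matrix ι ι 𝕜}

theorem PosSemidef.trace_mul_nonneg (hy : y.PosSemidef) (hx : x.PosSemidef) :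
    0 ≤ (y * x).trace := by
  obtain ⟨m, v, rfl⟩ := posSemidef_iff_eq_sum_vecMulVec.mp hy
  rw [trace_mul_comm, Finset.mul_sum, trace_sum]
  exact Finset.sum_nonneg fun i _ => by
    rw [trace_mul_vecMulVec]
    exact hx.dotProduct_mulVec_nonneg _

theorem PosDef.trace_mul_pos (hx : x.PosDef) (hy : y.PosSemidef) (hy0 : y ≠ 0) :
    0 < (y * x).trace := by
  obtain ⟨m, v, rfl⟩ := posSemidef_iff_eq_sum_vecMulVec.mp hy
  obtain ⟨i, hi⟩ : ∃ i, v i ≠ 0 := by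
    by_contra! h
    simp [h] at hy0
  rw [trace_mul_comm, Finset.mul_sum, trace_sum]
  simp only [trace_mul_vecMulVec]
  exact Finset.sum_pos' (fun j _ => hx.posSemidef.dotProduct_mulVec_nonneg _)
    ⟨i, Finset.mem_univ i, hx.dotProduct_mulVec_pos hi⟩

end RCLike

theorem exists_trace_mul_eq [DecidableEq ι] {R : Type*} [CommSemiring R]
    (f : Matrix ι ι R →ₗ[R] R) : ∃ Y : Matrix ι ι R, ∀ x, f x = (Y * x).trace := by
  refine ⟨of fun j i => f (single i j 1), fun x => ?_⟩
  induction x using Matrix.induction_on' with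
  | h_zero => simp
  | h_add p q hp hq => rw [map_add, hp, hq, Matrix.mul_add, trace_add]
  | h_std_basis i j a =>
    have hsingle : single i j a = a • single i j (1 : R) := by
      rw [smul_single, smul_eq_mul, mul_one]
    rw [trace_mul_single, of_apply, hsingle, map_smul, smul_eq_mul,
      MulOpposite.smul_eq_mul_unop, MulOpposite.unop_op, mul_comm]

theorem IsSymm.trace_transpose_mul {R : Type*} [CommSemiring R] {x : Matrix ι ι R}
    (hx : x.IsSymm) (Y : Matrix ι ι R) : (Yᵀ * x).trace = (Y * x).trace := by
  rw [← trace_transpose, transpose_mul, transpose_transpose, hx.eq, trace_mul_comm]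

theorem exists_isSymm_trace_mul_eq [DecidableEq ι] {R : Type*} [Field R] [CharZero R]
    (f : Matrix ι ι R →ₗ[R] R) :
    ∃ Z : Matrix ι ι R, Z.IsSymm ∧ ∀ x, x.IsSymm → (Z * x).trace = f x := by
  obtain ⟨Y, hY⟩ := exists_trace_mul_eq f
  refine ⟨(2⁻¹ : R) • (Y + Yᵀ), ?_, fun x hx => ?_⟩
  · rw [IsSymm, transpose_smul, transpose_add, transpose_transpose, add_comm]
  · rw [smul_mul, trace_smul, Matrix.add_mul, trace_add, hx.trace_transpose_mul, hY, smul_eq_mul]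
    ring

/-- Non-symmetric matrices are admitted so that this cone is open in the full matrix space; its
symmetric members are exactly the positive definite matrices. -/
def posQuadCone (ι : Type*) [Fintype ι] : Set (Matrix ι ι ℝ) :=
  {x | ∀ v : ι → ℝ, v ≠ 0 → 0 < v ⬝ᵥ x *ᵥ v}

theorem convex_posQuadCone : Convex ℝ (posQuadCone ι) := by
  simp only [posQuadCone, Set.ofPred_forall]
  refine convex_iInter fun v => convex_iInter fun _ => convex_halfSpace_gt ?_ 0
  exact ⟨fun a b => by simp [add_mulVec], fun s a => by simp [smul_mulVec]⟩

theorem posQuadCone_eq_sphere :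
    posQuadCone ι = {x | ∀ v ∈ Metric.sphere (0 : ι → ℝ) 1, 0 < v ⬝ᵥ x *ᵥ v} := by
  ext x
  refine ⟨fun hx v hv => hx v (ne_zero_of_mem_unit_sphere ⟨v, hv⟩), fun hx v hv => ?_⟩
  have hv' : 0 < ‖v‖ := norm_pos_iff.mpr hv
  have := hx (‖v‖⁻¹ • v) (by simp [norm_smul, hv'.ne'])
  rw [mulVec_smul, dotProduct_smul, smul_dotProduct, smul_smul, smul_eq_mul] at this
  exact pos_of_mul_pos_right this (by positivity)

theorem isOpen_posQuadCone : IsOpen (posQuadCone ι) := by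
  rw [posQuadCone_eq_sphere, isOpen_iff_eventually]
  intro x hx
  refine (isCompact_sphere 0 1).eventually_forall_of_forall_eventually fun v hv => ?_
  have hcont : Continuous fun p : Matrix ι ι ℝ × (ι → ℝ) => p.2 ⬝ᵥ p.1 *ᵥ p.2 :=
    continuous_snd.dotProduct (continuous_fst.matrix_mulVec continuous_snd)
  exact continuousAt_const.eventually_lt hcont.continuousAt (hx v hv)

theorem PosDef.of_mem_posQuadCone {x : Matrix ι ι ℝ} (hx : x.IsSymm) (hxU : x ∈ posQuadCone ι) :
    x.PosDef :=
  .of_dotProduct_mulVec_pos (isHermitian_iff_isSymm.mpr hx) fun v hv => by simpa using hxU v hv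

theorem smul_one_add_mem_posQuadCone [DecidableEq ι] {s : ℝ} (hs : 0 < s) {p : Matrix ι ι ℝ}
    (hp : p.PosSemidef) : s • 1 + p ∈ posQuadCone ι := fun v hv => by
  have hvp : 0 ≤ v ⬝ᵥ p *ᵥ v := by simpa using hp.dotProduct_mulVec_nonneg v
  have hvv : 0 < v ⬝ᵥ v := by simpa using dotProduct_self_star_pos_iff.mpr hv
  rw [add_mulVec, smul_mulVec, one_mulVec, dotProduct_add, dotProduct_smul, smul_eq_mul]
  positivity

open scoped Pointwise in
theorem exists_separating_functional_of_not_exists_posDef [DecidableEq ι]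
    {L : Submodule ℝ (Matrix ι ι ℝ)} (hL : ∀ x ∈ L, x.IsSymm) {c : Matrix ι ι ℝ} (hc : c.IsSymm)
    (h : ¬∃ l ∈ L, (l + c).PosDef) :
    ∃ f : Matrix ι ι ℝ →ₗ[ℝ] ℝ, (∀ l ∈ L, f l = 0) ∧ (∀ p : Matrix ι ι ℝ, p.PosSemidef → f p ≤ 0) ∧
      0 ≤ f c ∧ f 1 < f c := by
  have hdisj : Disjoint (posQuadCone ι) (c +ᵥ (L : Set (Matrix ι ι ℝ))) := by
    refine Set.disjoint_left.mpr ?_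
    rintro - hx ⟨l, hl, rfl⟩
    simp only [vadd_eq_add, add_comm c] at hx
    exact h ⟨l, hl, .of_mem_posQuadCone ((hL l hl).add hc) hx⟩
  obtain ⟨f, u, hfU, hft⟩ :=
    geometric_hahn_banach_open convex_posQuadCone isOpen_posQuadCone (L.convex.vadd c) hdisj
  have hf1 : f 1 < u := by simpa using hfU _ (smul_one_add_mem_posQuadCone one_pos .zero)
  have hfc : u ≤ f c := by simpa using hft c (Set.mem_vadd_set.mpr ⟨0, L.zero_mem, add_zero c⟩)
  have hu : 0 ≤ u := nonneg_of_forall_pos_mul_lt fun s hs => by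
    simpa using hfU _ (smul_one_add_mem_posQuadCone hs .zero)
  refine ⟨f, fun l hl => ?_, fun p hp => ?_, hu.trans hfc, hf1.trans_le hfc⟩
  · exact eq_zero_of_forall_le_add_mul fun s => by
      simpa [add_comm] using hft _ (Set.vadd_mem_vadd_set (a := c) (L.smul_mem s hl))
  · exact nonpos_of_forall_pos_add_mul_lt fun s hs => by
      simpa using hfU _ (smul_one_add_mem_posQuadCone one_pos (hp.smul hs.le))

theorem exists_posSemidef_trace_mul_nonpos_of_not_exists_posDef [DecidableEq ι]
    {L : Submodule ℝ (Matrix ι ι ℝ)} (hL : ∀ x ∈ L, x.IsSymm) {c : Matrix ι ι ℝ} (hc : c.IsSymm)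
    (h : ¬∃ l ∈ L, (l + c).PosDef) :
    ∃ y : Matrix ι ι ℝ, y.PosSemidef ∧ y ≠ 0 ∧
      (∀ l ∈ L, (y * l).trace = 0) ∧ (y * c).trace ≤ 0 := by
  obtain ⟨f, hfL, hfp, hfc, hf1⟩ := exists_separating_functional_of_not_exists_posDef hL hc h
  obtain ⟨Z, hZ, hZf⟩ := exists_isSymm_trace_mul_eq f
  refine ⟨-Z, .of_dotProduct_mulVec_nonneg ?_ fun v => ?_, fun hZ0 => ?_, fun l hl => ?_, ?_⟩
  · exact isHermitian_iff_isSymm.mpr (by rw [IsSymm, transpose_neg, hZ.eq])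
  · have hv := posSemidef_vecMulVec_self_star v
    rw [← trace_mul_vecMulVec, neg_mul, trace_neg, hZf _ (isHermitian_iff_isSymm.mp hv.1)]
    simpa using hfp _ hv
  · rw [← hZf 1 isSymm_one, ← hZf c hc, neg_eq_zero.mp hZ0, zero_mul, trace_zero] at hf1
    simp at hf1
  · rw [neg_mul, trace_neg, hZf l (hL l hl), hfL l hl, neg_zero]
  · rw [neg_mul, trace_neg, hZf c hc, neg_nonpos]
    exact hfc

end Matrix

/-- Weak feasibility of `(K_n, L, c)`: the affine set `L + c` (of symmetric matrices)
contains no positive definite matrix (i.e. misses the interior of `K_n` within `S_n`)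
but contains a positive semidefinite matrix, if and only if
(i) some `x ∈ L + c` is positive semidefinite, and
(ii) there is a nonzero `y ∈ L^⊥ ∩ K_n` (orthogonality w.r.t. the trace inner product)
with `⟨y, c⟩ = 0`. -/
theorem stmt1 (n : ℕ) (L : Submodule ℝ (MS n)) (hL : ∀ x ∈ L, x.IsSymm)
    (c : MS n) (hc : c.IsSymm) :
    ((¬ ∃ l ∈ L, (l + c).PosDef) ∧ (∃ l ∈ L, (l + c).PosSemidef)) ↔
      ((∃ l ∈ L, (l + c).PosSemidef) ∧
        ∃ y : MS n, y.PosSemidef ∧ y ≠ 0 ∧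
          (∀ l ∈ L, (y * l).trace = 0) ∧ (y * c).trace = 0) := by
  constructor
  · rintro ⟨hnpd, l₀, hl₀, hpsd⟩
    obtain ⟨y, hy, hy0, hyL, hyc⟩ :=
      exists_posSemidef_trace_mul_nonpos_of_not_exists_posDef hL hc hnpd
    refine ⟨⟨l₀, hl₀, hpsd⟩, y, hy, hy0, hyL, le_antisymm hyc ?_⟩
    calc 0 ≤ (y * (l₀ + c)).trace := hy.trace_mul_nonneg hpsd
      _ = (y * c).trace := by rw [Matrix.mul_add, trace_add, hyL l₀ hl₀, zero_add]
  · rintro ⟨hpsd, y, hy, hy0, hyL, hyc⟩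
    refine ⟨fun ⟨l, hl, hpd⟩ => (hpd.trace_mul_pos hy hy0).ne' ?_, hpsd⟩
    rw [Matrix.mul_add, trace_add, hyL l hl, hyc, add_zero]
end
end

section
/- Let L ⊆ S_n be a linear subspace and c ∈ S_n. If (K_n,L,c) is weakly infeasible, i.e. (L+c) ∩ K_n = ∅ and dist(K_n, L+c) = 0, then there exists a nonzero matrix a ∈ K_n ∩ L. -/
/-!
Pick `xₖ ∈ K_n` and `lₖ ∈ L` with `‖xₖ - (lₖ + c)‖ → 0`, and normalise the pairs `(lₖ, 1)` to
the unit sphere of `S_n × ℝ`. A limit point `(a, s)` has `s ≥ 0` and, since `K_n` is a closed cone,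
`a + s • c ∈ K_n`. If `s > 0` then `s⁻¹ • a + c` would be a feasible point; hence `s = 0`, and then
`a ∈ K_n ∩ L` has norm one.
-/

open Matrix

attribute [local instance] Matrix.frobeniusNormedAddCommGroup

noncomputable section

def PSD (n : ℕ) : Set (MS n) := {x | x.PosSemidef}

def affSet {n : ℕ} (L : Submodule ℝ (MS n)) (c : MS n) : Set (MS n) :=
  {x | ∃ l ∈ L, x = l + c}

/-- `dist(C, D) = inf {‖x − y‖ : x ∈ C, y ∈ D}` in the Frobenius norm. -/
def sdist {m : ℕ} (C D : Set (MS m)) : ℝ := sInf (Set.image2 dist C D)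

attribute [local instance] Matrix.frobeniusNormedSpace

open Filter Topology Metric

theorem Matrix.isClosed_setOf_posSemidef {ι R : Type*} [Fintype ι] [Ring R] [PartialOrder R]
    [StarRing R] [TopologicalSpace R] [IsTopologicalRing R] [ContinuousStar R] [T2Space R]
    [ClosedIciTopology R] : IsClosed {M : Matrix ι ι R | M.PosSemidef} := by
  simp only [posSemidef_iff_dotProduct_mulVec, Set.ofPred_and, Set.ofPred_forall]
  refine .inter (isClosed_eq (by fun_prop) continuous_id) (isClosed_iInter fun v => ?_)
  exact isClosed_Ici.preimage (by fun_prop)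

theorem exists_ne_zero_mem_cone_inter_of_tendsto_sub {E : Type*} [NormedAddCommGroup E]
    [NormedSpace ℝ E] [FiniteDimensional ℝ E] {K : Set E} (hK : IsClosed K)
    (hsmul : ∀ r : ℝ, 0 ≤ r → ∀ x ∈ K, r • x ∈ K) {L : Submodule ℝ E} {c : E}
    (hinf : ∀ l ∈ L, l + c ∉ K) {x l : ℕ → E} (hx : ∀ k, x k ∈ K) (hl : ∀ k, l k ∈ L)
    (hlim : Tendsto (fun k => x k - (l k + c)) atTop (𝓝 0)) :
    ∃ a ∈ K, a ∈ L ∧ a ≠ 0 := by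
  set t : ℕ → ℝ := fun k => ‖(l k, (1 : ℝ))‖
  have ht : ∀ k, 1 ≤ t k := fun k => by simp [t, Prod.norm_def]
  have ht₀ : ∀ k, 0 < t k := fun k => one_pos.trans_le (ht k)
  set u : ℕ → E × ℝ := fun k => (t k)⁻¹ • (l k, 1)
  have hu : ∀ k, u k ∈ sphere 0 1 := fun k => mem_sphere_zero_iff_norm.2 <| by
    rw [norm_smul, norm_inv, Real.norm_of_nonneg (ht₀ k).le, inv_mul_cancel₀ (ht₀ k).ne']
  obtain ⟨⟨a, s⟩, has, φ, hφ, hua⟩ := (isCompact_sphere (0 : E × ℝ) 1).tendsto_subseq hu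
  have ha : a ∈ L := L.closed_of_finiteDimensional.mem_of_tendsto
    ((continuous_fst.tendsto _).comp hua) (.of_forall fun k => L.smul_mem _ (hl _))
  have hs : 0 ≤ s := ge_of_tendsto ((continuous_snd.tendsto _).comp hua)
    (.of_forall fun k => by simp [u, (ht₀ _).le])
  -- `tₖ⁻¹ • xₖ = tₖ⁻¹ • (xₖ - (lₖ + c)) + (uₖ.1 + uₖ.2 • c)`, and `tₖ⁻¹ ≤ 1`.
  have hscaled : Tendsto (fun k => (t (φ k))⁻¹ • x (φ k)) atTop (𝓝 (a + s • c)) := by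
    have hbdd : IsBoundedUnder (· ≤ ·) atTop (norm ∘ fun k => (t (φ k))⁻¹) :=
      isBoundedUnder_of ⟨1, fun k => by
        simpa [abs_of_pos (ht₀ _)] using inv_le_one_of_one_le₀ (ht (φ k))⟩
    have herr := hbdd.smul_tendsto_zero (hlim.comp hφ.tendsto_atTop)
    have hmain : Tendsto (fun k => (u (φ k)).1 + (u (φ k)).2 • c) atTop (𝓝 (a + s • c)) :=
      ((continuous_fst.add (continuous_snd.smul continuous_const)).tendsto _).comp hua
    convert herr.add hmain using 1
    · ext k; simp [u, smul_sub, smul_add]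
    · simp
  have hmem : a + s • c ∈ K := hK.mem_of_tendsto hscaled
    (.of_forall fun k => hsmul _ (inv_nonneg.2 (ht₀ _).le) _ (hx _))
  rcases hs.eq_or_lt with rfl | hs
  · refine ⟨a, by simpa using hmem, ha, ?_⟩
    rintro rfl
    simp at has
  · refine absurd ?_ (hinf (s⁻¹ • a) (L.smul_mem _ ha))
    simpa [smul_add, smul_smul, inv_mul_cancel₀ hs.ne'] using hsmul s⁻¹ (inv_nonneg.2 hs.le) _ hmem

theorem exists_seq_tendsto_dist_of_sdist_eq_zero {m : ℕ} {C D : Set (MS m)} (hC : C.Nonempty)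
    (hD : D.Nonempty) (h : sdist C D = 0) :
    ∃ x y : ℕ → MS m, (∀ k, x k ∈ C) ∧ (∀ k, y k ∈ D) ∧
      Tendsto (fun k => dist (x k) (y k)) atTop (𝓝 0) := by
  have hbdd : BddBelow (Set.image2 dist C D) :=
    ⟨0, by rintro _ ⟨x, -, y, -, rfl⟩; exact dist_nonneg⟩
  obtain ⟨r, -, hr, hrS⟩ := exists_seq_tendsto_sInf (hC.image2 hD) hbdd
  choose x hx y hy hxy using hrS
  refine ⟨x, y, hx, hy, ?_⟩
  rw [sdist] at h
  simpa only [hxy, h] using hr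

theorem stmt4_general (n : ℕ) (L : Submodule ℝ (MS n)) (c : MS n)
    (hinf : ¬ ∃ x ∈ affSet L c, x.PosSemidef)
    (hdist : sdist (PSD n) (affSet L c) = 0) :
    ∃ a : MS n, a ≠ 0 ∧ a.PosSemidef ∧ a ∈ L := by
  obtain ⟨x, y, hx, hy, hxy⟩ := exists_seq_tendsto_dist_of_sdist_eq_zero (C := PSD n)
    (D := affSet L c) ⟨0, PosSemidef.zero⟩ ⟨c, 0, L.zero_mem, (zero_add c).symm⟩ hdist
  choose l hl hyl using hy
  have hlim : Tendsto (fun k => x k - (l k + c)) atTop (𝓝 0) := by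
    refine tendsto_zero_iff_norm_tendsto_zero.2 ?_
    simpa only [hyl, dist_eq_norm] using hxy
  obtain ⟨a, haK, haL, ha⟩ := exists_ne_zero_mem_cone_inter_of_tendsto_sub
    (K := PSD n) isClosed_setOf_posSemidef (fun r hr _ hx => hx.smul hr)
    (fun l hl hlc => hinf ⟨l + c, ⟨l, hl, rfl⟩, hlc⟩) hx hl hlim
  exact ⟨a, ha, haK, haL⟩

/-- If `(K_n, L, c)` is weakly infeasible, i.e. `(L+c) ∩ K_n = ∅` and
`dist(K_n, L+c) = 0`, then there is a nonzero matrix `a ∈ K_n ∩ L`. -/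
theorem stmt4 (n : ℕ) (L : Submodule ℝ (MS n)) (hL : ∀ x ∈ L, x.IsSymm)
    (c : MS n) (hc : c.IsSymm)
    (hinf : ¬ ∃ x ∈ affSet L c, x.PosSemidef)
    (hdist : sdist (PSD n) (affSet L c) = 0) :
    ∃ a : MS n, a ≠ 0 ∧ a.PosSemidef ∧ a ∈ L :=
  stmt4_general n L c hinf hdist
end
end

section
/- Let L ⊆ S_n be a linear subspace, c ∈ S_n, and 0 < k ≤ n. Suppose L contains a matrix x of the block form x = [[A, 0], [0, 0]] where A is a k×k positive definite matrix. Then (L+c) contains a positive definite matrix if and only if π̄_k(L+c) = {π̄_k(y) : y ∈ L+c} contains a positive definite (n−k)×(n−k) matrix. (Strong feasibility of (K_n,L,c) is equivalent to strong feasibility of the subproblem π̄_k(K_n,L,c).) -/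
open Matrix

attribute [local instance] Matrix.frobeniusNormedAddCommGroup

noncomputable section

/-- The principal submatrix of `x` with rows and columns in `[a, b)`; for `a = k`,
`b = n` this is `π̄_k(x)`, the lower-right `(n−k)×(n−k)` principal submatrix, and
for `a = 0`, `b = j` it is `π_j(x)`, the upper-left `j×j` principal submatrix. -/
def blk (n a b : ℕ) (x : MS n) : Matrix (Fin (b - a)) (Fin (b - a)) ℝ :=
  fun i j => if h : a + i.1 < n ∧ a + j.1 < n then x ⟨a + i.1, h.1⟩ ⟨a + j.1, h.2⟩ else 0

/-- `x` has the block form whose lower-right `(n−a)×(n−a)` principal submatrix equals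
`[[Â, 0], [0, 0]]` with `Â` a positive definite `(b−a)×(b−a)` matrix sitting in rows
and columns `[a, b)`. -/
def staircase (n a b : ℕ) (x : MS n) : Prop :=
  (blk n a b x).PosDef ∧
    ∀ i j : Fin n, a ≤ i.1 → a ≤ j.1 → (b ≤ i.1 ∨ b ≤ j.1) → x i j = 0

/-!
If `P ⪰ 0` and `Y` is positive definite on the null cone `{v | vᵀ P v = 0}`, then `Y + t P ≻ 0`
for `t` large: on the compact unit sphere, the open sets `{v | vᵀ (Y + t P) v > 0}` increase
with `t` and cover it. For `P = x`, that null cone consists of the vectors vanishing on the first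
`k` coordinates, and on those `(l + c)` is positive exactly when `π̄_k(l + c)` is positive
definite. So `l + t x + c ≻ 0`, with `l + t x ∈ L`. The converse holds because principal
submatrices of positive definite matrices are positive definite.
-/

namespace Matrix

theorem dotProduct_mulVec_eq_submatrix {ι κ R : Type*} [Fintype ι] [Fintype κ]
    [CommSemiring R] {e : ι → κ} (he : Function.Injective e) (M : Matrix κ κ R) (v : κ → R)
    (h : ∀ i j, (i ∉ Set.range e ∨ j ∉ Set.range e) → v i * M i j * v j = 0) :
    v ⬝ᵥ M *ᵥ v = (v ∘ e) ⬝ᵥ M.submatrix e e *ᵥ (v ∘ e) := by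
  simp only [dotProduct, mulVec, Finset.mul_sum, Function.comp_apply, submatrix_apply,
    ← mul_assoc]
  refine (Fintype.sum_of_injective e he _ _ (fun i hi => ?_) fun i => ?_).symm
  · exact Finset.sum_eq_zero fun j _ => h i j (Or.inl hi)
  · exact Fintype.sum_of_injective e he _ _ (fun j hj => h _ j (Or.inr hj)) fun _ => rfl

variable {ι : Type*} [Fintype ι]

theorem dotProduct_smul_mulVec_smul (M : Matrix ι ι ℝ) (a : ℝ) (v : ι → ℝ) :
    (a • v) ⬝ᵥ M *ᵥ (a • v) = a ^ 2 * (v ⬝ᵥ M *ᵥ v) := by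
  rw [mulVec_smul, smul_dotProduct, dotProduct_smul, smul_eq_mul, smul_eq_mul]
  ring

theorem posDef_of_dotProduct_mulVec_pos_of_norm_eq_one {M : Matrix ι ι ℝ} (hM : M.IsHermitian)
    (h : ∀ v : ι → ℝ, ‖v‖ = 1 → 0 < v ⬝ᵥ M *ᵥ v) : M.PosDef := by
  refine .of_dotProduct_mulVec_pos hM fun v hv => ?_
  have hnorm : 0 < ‖v‖ := norm_pos_iff.mpr hv
  have hunit := h (‖v‖⁻¹ • v) (by rw [norm_smul, norm_inv, norm_norm, inv_mul_cancel₀ hnorm.ne'])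
  rw [dotProduct_smul_mulVec_smul] at hunit
  rw [star_trivial]
  exact pos_of_mul_pos_right hunit (by positivity)

theorem exists_nat_posDef_add_smul {Y P : Matrix ι ι ℝ} (hY : Y.IsHermitian)
    (hP : P.PosSemidef) (h : ∀ v ≠ 0, v ⬝ᵥ P *ᵥ v = 0 → 0 < v ⬝ᵥ Y *ᵥ v) :
    ∃ t : ℕ, (Y + (t : ℝ) • P).PosDef := by
  have hP0 (v : ι → ℝ) : 0 ≤ v ⬝ᵥ P *ᵥ v := by simpa using hP.dotProduct_mulVec_nonneg v
  have hexpand (t : ℝ) (v : ι → ℝ) :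
      v ⬝ᵥ (Y + t • P) *ᵥ v = v ⬝ᵥ Y *ᵥ v + t * (v ⬝ᵥ P *ᵥ v) := by
    rw [add_mulVec, dotProduct_add, smul_mulVec, dotProduct_smul, smul_eq_mul]
  let U (t : ℕ) : Set (ι → ℝ) := {v | 0 < v ⬝ᵥ (Y + (t : ℝ) • P) *ᵥ v}
  have hU_open (t : ℕ) : IsOpen (U t) :=
    isOpen_lt continuous_const
      (continuous_id.dotProduct (continuous_const.matrix_mulVec continuous_id))
  have hU_mono : Monotone U := fun s t hst v hv => by
    simp only [U, Set.mem_ofPred_eq, hexpand] at hv ⊢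
    have : (s : ℝ) ≤ t := by exact_mod_cast hst
    nlinarith [hP0 v]
  -- On the sphere, either `vᵀ P v > 0` and a large `t` wins, or `vᵀ P v = 0` and `vᵀ Y v > 0`.
  have hcover : Metric.sphere (0 : ι → ℝ) 1 ⊆ ⋃ t, U t := by
    intro v hv
    have hv0 : v ≠ 0 := ne_zero_of_mem_unit_sphere (⟨v, hv⟩ : Metric.sphere (0 : ι → ℝ) 1)
    simp only [Set.mem_iUnion, U, Set.mem_ofPred_eq, hexpand]
    rcases (hP0 v).eq_or_lt with hPv | hPv
    · exact ⟨0, by simpa [← hPv] using h v hv0 hPv.symm⟩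
    · obtain ⟨t, ht⟩ := exists_nat_gt (-(v ⬝ᵥ Y *ᵥ v) / (v ⬝ᵥ P *ᵥ v))
      exact ⟨t, by rw [div_lt_iff₀ hPv] at ht; linarith⟩
  obtain ⟨t, ht⟩ :=
    (isCompact_sphere 0 1).elim_directed_cover U hU_open hcover hU_mono.directed_le
  refine ⟨t, posDef_of_dotProduct_mulVec_pos_of_norm_eq_one
    (hY.add (hP.smul t.cast_nonneg).isHermitian) fun v hv => ht ?_⟩
  simpa using hv

end Matrix

def Fin.shift {n : ℕ} (a b : ℕ) (hb : b ≤ n) (i : Fin (b - a)) : Fin n := ⟨a + i, by omega⟩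

theorem Fin.shift_injective {n a b : ℕ} (hb : b ≤ n) : Function.Injective (Fin.shift a b hb) :=
  fun i j h => Fin.ext (by simpa [Fin.shift] using h)

theorem Fin.mem_range_shift {n a b : ℕ} (hb : b ≤ n) {j : Fin n} :
    j ∈ Set.range (Fin.shift a b hb) ↔ a ≤ j ∧ j < b := by
  refine ⟨?_, fun h => ⟨⟨j - a, by omega⟩, Fin.ext (by simp [Fin.shift]; omega)⟩⟩
  rintro ⟨i, rfl⟩
  simp only [Fin.shift]
  omega

theorem blk_eq_submatrix {n a b : ℕ} (hb : b ≤ n) (x : MS n) :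
    blk n a b x = x.submatrix (Fin.shift a b hb) (Fin.shift a b hb) := by
  ext i j
  simp only [blk, submatrix_apply, Fin.shift]
  rw [dif_pos ⟨by omega, by omega⟩]

theorem dotProduct_mulVec_pos_of_blk_posDef {n a b : ℕ} (hb : b ≤ n) {y : MS n}
    (hy : (blk n a b y).PosDef) {v : Fin n → ℝ} (hv : v ≠ 0)
    (hsupp : ∀ i : Fin n, i < a ∨ b ≤ i → v i = 0) : 0 < v ⬝ᵥ y *ᵥ v := by
  have hsupp' (i : Fin n) (hi : i ∉ Set.range (Fin.shift a b hb)) : v i = 0 :=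
    hsupp i (by rw [Fin.mem_range_shift] at hi; omega)
  have hrestr : v ∘ Fin.shift a b hb ≠ 0 := fun h0 => hv <| funext fun i => by
    by_cases hi : i ∈ Set.range (Fin.shift a b hb)
    · obtain ⟨j, rfl⟩ := hi
      exact congrFun h0 j
    · exact hsupp' i hi
  rw [blk_eq_submatrix hb] at hy
  rw [dotProduct_mulVec_eq_submatrix (Fin.shift_injective hb) y v fun i j hij => by
    rcases hij with hi | hj <;> simp [hsupp' _ ‹_›]]
  simpa using hy.dotProduct_mulVec_pos hrestr

namespace staircase

variable {n k : ℕ} (hkn : k ≤ n) {x : MS n} (hx : staircase n 0 k x)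
include hkn hx

theorem dotProduct_mulVec (v : Fin n → ℝ) :
    v ⬝ᵥ x *ᵥ v = (v ∘ Fin.shift 0 k hkn) ⬝ᵥ blk n 0 k x *ᵥ (v ∘ Fin.shift 0 k hkn) := by
  rw [blk_eq_submatrix hkn]
  refine dotProduct_mulVec_eq_submatrix (Fin.shift_injective hkn) x v fun i j hij => ?_
  simp only [Fin.mem_range_shift, Nat.zero_le, true_and, not_lt] at hij
  simp [hx.2 i j (Nat.zero_le _) (Nat.zero_le _) hij]

theorem posSemidef (hsymm : x.IsSymm) : x.PosSemidef :=
  .of_dotProduct_mulVec_nonneg (isHermitian_iff_isSymm.mpr hsymm) fun v => by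
    simpa [hx.dotProduct_mulVec hkn] using
      hx.1.posSemidef.dotProduct_mulVec_nonneg (v ∘ Fin.shift 0 k hkn)

theorem eq_zero_of_dotProduct_mulVec_eq_zero {v : Fin n → ℝ} (hv : v ⬝ᵥ x *ᵥ v = 0)
    {i : Fin n} (hi : i < k) : v i = 0 := by
  have hrestr : v ∘ Fin.shift 0 k hkn = 0 := by
    by_contra hne
    have hpos := hx.1.dotProduct_mulVec_pos hne
    rw [star_trivial, ← hx.dotProduct_mulVec hkn, hv] at hpos
    exact hpos.false
  simpa [Fin.shift] using congrFun hrestr ⟨i, by omega⟩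

end staircase

theorem stmt5_general (n k : ℕ) (hkn : k ≤ n)
    (L : Submodule ℝ (MS n)) (hL : ∀ y ∈ L, y.IsSymm) (c : MS n) (hc : c.IsSymm)
    (x : MS n) (hxL : x ∈ L) (hx : staircase n 0 k x) :
    (∃ l ∈ L, (l + c).PosDef) ↔ (∃ l ∈ L, (blk n k n (l + c)).PosDef) := by
  constructor
  · rintro ⟨l, hl, hpos⟩
    exact ⟨l, hl, blk_eq_submatrix le_rfl (l + c) ▸ hpos.submatrix (Fin.shift_injective le_rfl)⟩
  · rintro ⟨l, hl, hpos⟩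
    have hker (v : Fin n → ℝ) (hv : v ≠ 0) (hxv : v ⬝ᵥ x *ᵥ v = 0) :
        0 < v ⬝ᵥ (l + c) *ᵥ v :=
      dotProduct_mulVec_pos_of_blk_posDef le_rfl hpos hv fun i hi =>
        hx.eq_zero_of_dotProduct_mulVec_eq_zero hkn hxv (hi.resolve_right (not_le.mpr i.2))
    obtain ⟨t, ht⟩ := exists_nat_posDef_add_smul
      (isHermitian_iff_isSymm.mpr ((hL l hl).add hc)) (hx.posSemidef hkn (hL x hxL)) hker
    exact ⟨l + (t : ℝ) • x, L.add_mem hl (L.smul_mem _ hxL), by rwa [add_right_comm]⟩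

/-- If `L` contains a matrix `x = [[A, 0], [0, 0]]` with `A` a `k×k` positive definite
matrix (`0 < k ≤ n`), then `L + c` contains a positive definite matrix iff
`π̄_k(L+c)` contains a positive definite `(n−k)×(n−k)` matrix. -/
theorem stmt5 (n k : ℕ) (hk : 0 < k) (hkn : k ≤ n)
    (L : Submodule ℝ (MS n)) (hL : ∀ y ∈ L, y.IsSymm) (c : MS n) (hc : c.IsSymm)
    (x : MS n) (hxL : x ∈ L) (hx : staircase n 0 k x) :
    (∃ l ∈ L, (l + c).PosDef) ↔ (∃ l ∈ L, (blk n k n (l + c)).PosDef) :=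
  stmt5_general n k hkn L hL c hc x hxL hx
end
end

section
/- Let L ⊆ S_n be a linear subspace, c ∈ S_n, and 0 < k ≤ n. Suppose L contains a matrix x of the block form x = [[A, 0], [0, 0]] where A is a k×k positive definite matrix. Then dist(K_n, L+c) > 0 if and only if dist(K_{n−k}, π̄_k(L+c)) > 0, where π̄_k(L+c) = {π̄_k(y) : y ∈ L+c}. (Strong infeasibility of (K_n,L,c) is equivalent to strong infeasibility of the subproblem π̄_k(K_n,L,c).) -/
/-!
Passing to the lower-right block is 1-Lipschitz in the Frobenius norm and maps `K_n` into
`K_{n-k}`, so `dist(K_{n-k}, π̄_k(L+c)) ≤ dist(K_n, L+c)`. Conversely, let `y ∈ L+c` and let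
`z ≻ 0` be close to `π̄_k(y)`. Replacing the lower-right block of `y + t x ∈ L+c` by `z` moves
it by exactly `‖z - π̄_k(y)‖`, and the result is positive semidefinite for large `t`: by the
Schur complement criterion this only asks that `y₁₁ + t A - y₁₂ z⁻¹ y₂₁ ⪰ 0`, which holds once
`t A` dominates. Since `K_{n-k}` is the closure of the positive definite cone, the two distances
are equal.
-/

open Matrix

attribute [local instance] Matrix.frobeniusNormedAddCommGroup

noncomputable section

open Filter Topology

lemma IsStrictlyPositive.exists_nonneg_add_smul {A : Type*} [TopologicalSpace A] [Ring A]
    [StarRing A] [PartialOrder A] [StarOrderedRing A] [Algebra ℝ A] [StarModule ℝ A]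
    [NonnegSpectrumClass ℝ A] [ContinuousFunctionalCalculus ℝ A IsSelfAdjoint] {a b : A}
    (ha : IsStrictlyPositive a) (hb : IsSelfAdjoint b) : ∃ t : ℝ, 0 ≤ b + t • a := by
  rcases subsingleton_or_nontrivial A with _ | _
  · exact ⟨0, (Subsingleton.elim _ _ : (0 : A) = _).le⟩
  obtain ⟨r, hr, hra⟩ := (CFC.exists_pos_algebraMap_le_iff ha.isSelfAdjoint).2
    fun x hx => ha.spectrum_pos hx
  obtain ⟨s, hs⟩ := (ContinuousFunctionalCalculus.isCompact_spectrum (R := ℝ) b).bddBelow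
  have hsb : algebraMap ℝ A s ≤ b := algebraMap_le_of_le_spectrum fun x hx => hs hx
  refine ⟨|s| / r, ?_⟩
  calc (0 : A) ≤ algebraMap ℝ A (s + |s| / r * r) := by
        rw [div_mul_cancel₀ _ hr.ne']
        exact algebraMap_nonneg _ (neg_le_iff_add_nonneg.mp (neg_abs_le s))
    _ = algebraMap ℝ A s + (|s| / r) • algebraMap ℝ A r := by
        rw [map_add, map_mul, Algebra.smul_def]
    _ ≤ b + (|s| / r) • a := add_le_add hsb (smul_le_smul_of_nonneg_left hra (by positivity))

namespace Matrix

variable {m l n o α 𝕜 : Type*}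

lemma toBlocks₂₂_sub [Sub α] (M N : Matrix (m ⊕ l) (n ⊕ o) α) :
    (M - N).toBlocks₂₂ = M.toBlocks₂₂ - N.toBlocks₂₂ :=
  rfl

variable [Fintype m] [Fintype l] [Fintype n] [Fintype o]

section Frobenius

variable [NormedAddCommGroup α]

lemma frobenius_norm_sq (M : Matrix m n α) : ‖M‖ ^ 2 = ∑ i, ∑ j, ‖M i j‖ ^ 2 := by
  have hsum : 0 ≤ ∑ i, ∑ j, ‖M i j‖ ^ (2 : ℝ) := by positivity
  rw [frobenius_norm_def, ← Real.rpow_natCast, ← Real.rpow_mul hsum]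
  norm_num

lemma frobenius_norm_submatrix_equiv (M : Matrix m n α) (e₁ : l ≃ m) (e₂ : o ≃ n) :
    ‖M.submatrix e₁ e₂‖ = ‖M‖ := by
  refine (sq_eq_sq₀ (norm_nonneg _) (norm_nonneg _)).1 ?_
  simp only [frobenius_norm_sq, submatrix_apply]
  rw [← e₁.sum_comp fun i => ∑ j, ‖M i j‖ ^ 2]
  exact Finset.sum_congr rfl fun i _ => e₂.sum_comp fun j => ‖M (e₁ i) j‖ ^ 2

lemma frobenius_norm_fromBlocks_sq (A : Matrix m n α) (B : Matrix m o α) (C : Matrix l n α)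
    (D : Matrix l o α) :
    ‖fromBlocks A B C D‖ ^ 2 = ‖A‖ ^ 2 + ‖B‖ ^ 2 + ‖C‖ ^ 2 + ‖D‖ ^ 2 := by
  simp only [frobenius_norm_sq, Fintype.sum_sum_type, fromBlocks_apply₁₁, fromBlocks_apply₁₂,
    fromBlocks_apply₂₁, fromBlocks_apply₂₂, Finset.sum_add_distrib]
  ring

lemma frobenius_norm_toBlocks₂₂_le (M : Matrix (m ⊕ l) (n ⊕ o) α) : ‖M.toBlocks₂₂‖ ≤ ‖M‖ := by
  refine le_of_sq_le_sq ?_ (norm_nonneg _)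
  conv_rhs => rw [← fromBlocks_toBlocks M, frobenius_norm_fromBlocks_sq]
  nlinarith [sq_nonneg ‖M.toBlocks₁₁‖, sq_nonneg ‖M.toBlocks₁₂‖, sq_nonneg ‖M.toBlocks₂₁‖]

lemma frobenius_norm_fromBlocks_zero_zero_zero (D : Matrix l o α) :
    ‖(fromBlocks 0 0 0 D : Matrix (m ⊕ l) (n ⊕ o) α)‖ = ‖D‖ := by
  refine (sq_eq_sq₀ (norm_nonneg _) (norm_nonneg _)).1 ?_
  simp [frobenius_norm_fromBlocks_sq]

end Frobenius

section PosSemidef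

open scoped ComplexOrder MatrixOrder

variable [DecidableEq m] [DecidableEq l] [RCLike 𝕜]

lemma PosDef.exists_posSemidef_add_smul {A M : Matrix m m 𝕜} (hA : A.PosDef)
    (hM : M.IsHermitian) : ∃ t : ℝ, (M + t • A).PosSemidef := by
  obtain ⟨t, ht⟩ := hA.isStrictlyPositive.exists_nonneg_add_smul hM
  exact ⟨t, nonneg_iff_posSemidef.mp ht⟩

lemma exists_posSemidef_add_smul_fromBlocks {Y : Matrix (m ⊕ l) (m ⊕ l) 𝕜} (hY : Y.IsHermitian)
    {A : Matrix m m 𝕜} (hA : A.PosDef) {Z : Matrix l l 𝕜} (hZ : Z.PosDef) :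
    ∃ t : ℝ, (Y + t • fromBlocks A 0 0 0 + fromBlocks 0 0 0 (Z - Y.toBlocks₂₂)).PosSemidef := by
  let := hZ.isUnit.invertible
  set B := Y.toBlocks₁₂
  have hS : (Y.toBlocks₁₁ - B * Z⁻¹ * Bᴴ).IsHermitian := by
    refine (hY.submatrix Sum.inl).sub ?_
    simp [IsHermitian, Matrix.mul_assoc, hZ.inv.isHermitian.eq]
  obtain ⟨t, ht⟩ := hA.exists_posSemidef_add_smul hS
  refine ⟨t, ?_⟩
  have hblocks : Y + t • fromBlocks A 0 0 0 + fromBlocks 0 0 0 (Z - Y.toBlocks₂₂)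
      = fromBlocks (Y.toBlocks₁₁ + t • A) B Bᴴ Z := by
    ext (i | i) (j | j)
    · simp [toBlocks₁₁]
    · simp [B, toBlocks₁₂]
    · simp [B, toBlocks₁₂, ← hY.apply (Sum.inr i) (Sum.inl j)]
    · simp [toBlocks₂₂]
  rwa [hblocks, PosDef.fromBlocks₂₂ _ _ hZ, add_sub_right_comm]

end PosSemidef

end Matrix

section Distance

variable {p q : ℕ} {C D : Set (MS p)}

lemma sdist_le_dist {a b : MS p} (ha : a ∈ C) (hb : b ∈ D) : sdist C D ≤ dist a b :=
  csInf_le ⟨0, by rintro _ ⟨a, -, b, -, rfl⟩; exact dist_nonneg⟩ (Set.mem_image2_of_mem ha hb)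

lemma le_sdist {r : ℝ} (hC : C.Nonempty) (hD : D.Nonempty)
    (h : ∀ a ∈ C, ∀ b ∈ D, r ≤ dist a b) : r ≤ sdist C D :=
  le_csInf (hC.image2 hD) <| by rintro _ ⟨a, ha, b, hb, rfl⟩; exact h a ha b hb

lemma sdist_image_le {C' : Set (MS q)} {f : MS p → MS q}
    (hf : ∀ a b, dist (f a) (f b) ≤ dist a b) (hfC : Set.MapsTo f C C') (hC : C.Nonempty)
    (hD : D.Nonempty) : sdist C' (f '' D) ≤ sdist C D :=
  le_sdist hC hD fun a ha b hb =>
    (sdist_le_dist (hfC ha) (Set.mem_image_of_mem f hb)).trans (hf a b)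

end Distance

section AffineSet

variable {n : ℕ} {L : Submodule ℝ (MS n)} {c y : MS n}

lemma affSet_nonempty (L : Submodule ℝ (MS n)) (c : MS n) : (affSet L c).Nonempty :=
  ⟨c, 0, L.zero_mem, (zero_add c).symm⟩

lemma isSymm_of_mem_affSet (hL : ∀ y ∈ L, y.IsSymm) (hc : c.IsSymm) (hy : y ∈ affSet L c) :
    y.IsSymm := by
  obtain ⟨l, hl, rfl⟩ := hy
  exact (hL l hl).add hc

lemma add_smul_mem_affSet {x : MS n} (hy : y ∈ affSet L c) (hx : x ∈ L) (t : ℝ) :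
    y + t • x ∈ affSet L c := by
  obtain ⟨l, hl, rfl⟩ := hy
  exact ⟨l + t • x, L.add_mem hl (L.smul_mem t hx), by abel⟩

end AffineSet

def finSumFinSubEquiv {k n : ℕ} (h : k ≤ n) : Fin k ⊕ Fin (n - k) ≃ Fin n :=
  finSumFinEquiv.trans (finCongr (Nat.add_sub_cancel' h))

section Blocks

variable {n k : ℕ}

@[simp] lemma finSumFinSubEquiv_apply_inl (hkn : k ≤ n) (i : Fin k) :
    finSumFinSubEquiv hkn (.inl i) = ⟨i, by omega⟩ :=
  Fin.ext rfl

@[simp] lemma finSumFinSubEquiv_apply_inr (hkn : k ≤ n) (i : Fin (n - k)) :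
    finSumFinSubEquiv hkn (.inr i) = ⟨k + i, by omega⟩ :=
  Fin.ext rfl

lemma blk_eq_toBlocks₂₂ (hkn : k ≤ n) (y : MS n) :
    blk n k n y = (y.submatrix (finSumFinSubEquiv hkn) (finSumFinSubEquiv hkn)).toBlocks₂₂ := by
  ext i j
  simp [blk, toBlocks₂₂, show k + i < n by omega, show k + j < n by omega]

lemma staircase.submatrix_eq_fromBlocks (hkn : k ≤ n) {x : MS n} (hx : staircase n 0 k x) :
    x.submatrix (finSumFinSubEquiv hkn) (finSumFinSubEquiv hkn) =
      fromBlocks (blk n 0 k x) 0 0 0 := by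
  ext (i | i) (j | j)
  · simp [blk, show (i : ℕ) < n by omega, show (j : ℕ) < n by omega]
  · exact hx.2 _ _ (Nat.zero_le _) (Nat.zero_le _) (.inr (by simp))
  · exact hx.2 _ _ (Nat.zero_le _) (Nat.zero_le _) (.inl (by simp))
  · exact hx.2 _ _ (Nat.zero_le _) (Nat.zero_le _) (.inl (by simp))

lemma dist_blk_le (hkn : k ≤ n) (a b : MS n) : dist (blk n k n a) (blk n k n b) ≤ dist a b := by
  rw [dist_eq_norm, dist_eq_norm, blk_eq_toBlocks₂₂ hkn, blk_eq_toBlocks₂₂ hkn,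
    ← frobenius_norm_submatrix_equiv (a - b) (finSumFinSubEquiv hkn) (finSumFinSubEquiv hkn),
    submatrix_sub, ← toBlocks₂₂_sub]
  exact frobenius_norm_toBlocks₂₂_le _

lemma blk_mem_PSD (hkn : k ≤ n) {a : MS n} (ha : a ∈ PSD n) : blk n k n a ∈ PSD (n - k) := by
  rw [blk_eq_toBlocks₂₂ hkn]
  exact (ha.submatrix (finSumFinSubEquiv hkn)).submatrix Sum.inr

end Blocks

section Main

variable {n k : ℕ} {L : Submodule ℝ (MS n)} {c x : MS n}

lemma exists_dist_eq_dist_blk (hkn : k ≤ n) (hL : ∀ y ∈ L, y.IsSymm) (hc : c.IsSymm)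
    (hxL : x ∈ L) (hx : staircase n 0 k x) {y : MS n} (hy : y ∈ affSet L c)
    {z : Matrix (Fin (n - k)) (Fin (n - k)) ℝ} (hz : z.PosDef) :
    ∃ W ∈ PSD n, ∃ b ∈ affSet L c, dist W b = dist z (blk n k n y) := by
  have hxe := hx.submatrix_eq_fromBlocks hkn
  have hye := blk_eq_toBlocks₂₂ hkn y
  set e := finSumFinSubEquiv hkn
  have hyH : (y.submatrix e e).IsHermitian :=
    (isHermitian_iff_isSymm.mpr (isSymm_of_mem_affSet hL hc hy)).submatrix e
  obtain ⟨t, ht⟩ := exists_posSemidef_add_smul_fromBlocks hyH hx.1 hz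
  set E := (fromBlocks 0 0 0 (z - blk n k n y) : Matrix (Fin k ⊕ Fin (n - k)) _ ℝ)
  refine ⟨y + t • x + E.submatrix e.symm e.symm, ?_, y + t • x, add_smul_mem_affSet hy hxL t, ?_⟩
  · show PosSemidef _
    rw [← posSemidef_submatrix_equiv e]
    simpa [submatrix_add, submatrix_smul, hxe, E, hye] using ht
  · rw [dist_eq_norm, dist_eq_norm, add_sub_cancel_left, frobenius_norm_submatrix_equiv,
      frobenius_norm_fromBlocks_zero_zero_zero]

lemma sdist_PSD_le_sdist_blk (hkn : k ≤ n) (hL : ∀ y ∈ L, y.IsSymm) (hc : c.IsSymm)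
    (hxL : x ∈ L) (hx : staircase n 0 k x) :
    sdist (PSD n) (affSet L c) ≤ sdist (PSD (n - k)) (blk n k n '' affSet L c) := by
  refine le_sdist ⟨0, PosSemidef.zero⟩ ((affSet_nonempty L c).image _) ?_
  rintro z hz _ ⟨y, hy, rfl⟩
  have hlift : ∀ δ : ℝ, 0 < δ →
      sdist (PSD n) (affSet L c) ≤ dist (z + δ • 1) (blk n k n y) := by
    intro δ hδ
    obtain ⟨W, hW, b, hb, hWb⟩ := exists_dist_eq_dist_blk hkn hL hc hxL hx hy
      (PosDef.posSemidef_add hz (PosDef.one.smul hδ))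
    exact hWb ▸ sdist_le_dist hW hb
  have hlim : Tendsto (fun δ : ℝ => dist (z + δ • 1) (blk n k n y)) (𝓝[>] 0)
      (𝓝 (dist z (blk n k n y))) := by
    have hcont : Continuous fun δ : ℝ => dist (z + δ • 1) (blk n k n y) := by fun_prop
    simpa using (hcont.tendsto 0).mono_left nhdsWithin_le_nhds
  exact ge_of_tendsto hlim (eventually_nhdsWithin_of_forall fun δ hδ => hlift δ hδ)

theorem sdist_PSD_affSet_eq_sdist_blk (hkn : k ≤ n) (hL : ∀ y ∈ L, y.IsSymm) (hc : c.IsSymm)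
    (hxL : x ∈ L) (hx : staircase n 0 k x) :
    sdist (PSD n) (affSet L c) = sdist (PSD (n - k)) (blk n k n '' affSet L c) :=
  le_antisymm (sdist_PSD_le_sdist_blk hkn hL hc hxL hx)
    (sdist_image_le (dist_blk_le hkn) (fun _ => blk_mem_PSD hkn) ⟨0, PosSemidef.zero⟩
      (affSet_nonempty L c))

end Main

theorem stmt6_general (n k : ℕ) (hkn : k ≤ n)
    (L : Submodule ℝ (MS n)) (hL : ∀ y ∈ L, y.IsSymm) (c : MS n) (hc : c.IsSymm)
    (x : MS n) (hxL : x ∈ L) (hx : staircase n 0 k x) :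
    sdist (PSD n) (affSet L c) > 0 ↔
      sdist (PSD (n - k)) (blk n k n '' affSet L c) > 0 := by
  rw [sdist_PSD_affSet_eq_sdist_blk hkn hL hc hxL hx]

/-- If `L` contains a matrix `x = [[A, 0], [0, 0]]` with `A` a `k×k` positive definite
matrix (`0 < k ≤ n`), then `dist(K_n, L+c) > 0` iff `dist(K_{n−k}, π̄_k(L+c)) > 0`. -/
theorem stmt6 (n k : ℕ) (hk : 0 < k) (hkn : k ≤ n)
    (L : Submodule ℝ (MS n)) (hL : ∀ y ∈ L, y.IsSymm) (c : MS n) (hc : c.IsSymm)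
    (x : MS n) (hxL : x ∈ L) (hx : staircase n 0 k x) :
    sdist (PSD n) (affSet L c) > 0 ↔
      sdist (PSD (n - k)) (blk n k n '' affSet L c) > 0 :=
  stmt6_general n k hkn L hL c hc x hxL hx
end
end

section
/- Let L ⊆ S_n be a linear subspace, c ∈ S_n, and 0 < k ≤ n. Suppose L contains a matrix x of the block form x = [[A, 0], [0, 0]] where A is a k×k positive definite matrix. Then (K_n,L,c) is in weak status (weakly feasible or weakly infeasible) if and only if the subproblem π̄_k(K_n,L,c) = (K_{n−k}, π̄_k(L), π̄_k(c)) is in weak status. -/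
open Matrix

attribute [local instance] Matrix.frobeniusNormedAddCommGroup

noncomputable section

/-- The problem with affine feasible set `D` (of symmetric matrices) is in weak status:
either weakly feasible (`D` meets `K_m` but not its interior, i.e. `D` contains a
positive semidefinite but no positive definite matrix), or weakly infeasible
(`D ∩ K_m = ∅` and `dist(K_m, D) = 0`). -/
def weakStatus {m : ℕ} (D : Set (MS m)) : Prop :=
  ((∃ u ∈ D, u.PosSemidef) ∧ ¬ ∃ u ∈ D, u.PosDef) ∨
    ((¬ ∃ u ∈ D, u.PosSemidef) ∧ sdist (PSD m) D = 0)

/-!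
Weak status is "no positive definite point, but the cone `K` is at distance zero", and both
properties pass between `D = L + c` and `π̄_k(D)`. The key point is that `D` is invariant under
`u ↦ u + t x`: if the lower-right block `R` of a symmetric `u` is positive definite, the Schur
complement of `R` in `u + t x` is that of `u` plus `t A`, which is positive definite for large
`t`, so `u + t x` is positive definite. Hence a positive definite point of `π̄_k(D)` lifts to one
of `D`. For the distances, `π̄_k` is `1`-Lipschitz and preserves positive semidefiniteness; in the
other direction a positive semidefinite `w` with `‖w - π̄_k(u)‖ < δ` is corrected to the matrix
`u + (w - π̄_k(u) + δ I) ⊕ 0`, whose lower-right block `w + δ I` is positive definite, and adding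
`t x` gives a positive definite matrix within `(1 + ‖I‖) δ` of `u + t x ∈ D`.
-/

open scoped MatrixOrder ComplexOrder

theorem Fintype.sum_comp_le_sum_of_injective {ι κ M : Type*} [Fintype ι] [Fintype κ]
    [AddCommMonoid M] [PartialOrder M] [IsOrderedAddMonoid M] {e : κ → ι} (he : e.Injective)
    {F : ι → M} (hF : 0 ≤ F) : ∑ j, F (e j) ≤ ∑ i, F i :=
  (Finset.sum_map _ ⟨e, he⟩ F).symm.trans_le (Finset.sum_le_univ_sum_of_nonneg hF)

namespace Matrix

section Frobenius

variable {m m' n n' α : Type*} [Fintype m] [Fintype m'] [Fintype n] [Fintype n']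
  [NormedAddCommGroup α]

theorem frobenius_norm_submatrix_le (A : Matrix m n α) {f : m' → m} {g : n' → n}
    (hf : f.Injective) (hg : g.Injective) : ‖A.submatrix f g‖ ≤ ‖A‖ := by
  rw [frobenius_norm_def, frobenius_norm_def]
  gcongr
  calc ∑ i, ∑ j, ‖A (f i) (g j)‖ ^ (2 : ℝ)
      ≤ ∑ i, ∑ j, ‖A (f i) j‖ ^ (2 : ℝ) := by
        gcongr with i
        exact Fintype.sum_comp_le_sum_of_injective hg (F := fun j => ‖A (f i) j‖ ^ (2 : ℝ))
          fun _ => by positivity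
    _ ≤ ∑ i, ∑ j, ‖A i j‖ ^ (2 : ℝ) :=
        Fintype.sum_comp_le_sum_of_injective hf (F := fun i => ∑ j, ‖A i j‖ ^ (2 : ℝ))
          fun _ => by positivity

theorem frobenius_norm_fromBlocks_zero (D : Matrix n n' α) :
    ‖fromBlocks (0 : Matrix m m' α) 0 0 D‖ = ‖D‖ := by
  simp [frobenius_norm_def, Fintype.sum_sum_type]

end Frobenius

section PositiveDefinite

variable {m p 𝕜 : Type*} [Fintype m] [DecidableEq m] [Fintype p] [DecidableEq p] [RCLike 𝕜]

theorem IsHermitian.exists_algebraMap_le {S : Matrix m m 𝕜} (hS : S.IsHermitian) :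
    ∃ s : ℝ, algebraMap ℝ _ s ≤ S := by
  obtain ⟨s, hs⟩ := (finite_real_spectrum (A := S)).bddBelow
  exact ⟨s, algebraMap_le_of_le_spectrum (fun x hx => hs hx) hS.isSelfAdjoint⟩

theorem PosDef.exists_pos_algebraMap_le [Nonempty m] {A : Matrix m m 𝕜} (hA : A.PosDef) :
    ∃ r > 0, algebraMap ℝ _ r ≤ A :=
  (CFC.exists_pos_algebraMap_le_iff hA.isHermitian.isSelfAdjoint).2
    fun _ hx => hA.isStrictlyPositive.spectrum_pos hx

theorem IsHermitian.exists_posDef_add_smul [Nonempty m] {S A : Matrix m m 𝕜} (hS : S.IsHermitian)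
    (hA : A.PosDef) : ∃ t : ℝ, (S + t • A).PosDef := by
  obtain ⟨s, hs⟩ := hS.exists_algebraMap_le
  obtain ⟨r, hr, hrA⟩ := hA.exists_pos_algebraMap_le
  rw [le_iff, Algebra.algebraMap_eq_smul_one] at hs hrA
  set t := |1 - s| / r
  have hst : 0 ≤ s + t * r - 1 := by
    rw [div_mul_cancel₀ _ hr.ne']; linarith [le_abs_self (1 - s)]
  have hsplit : S + t • A =
      1 + ((S - s • 1) + t • (A - r • 1) + (s + t * r - 1) • (1 : Matrix m m 𝕜)) := by
    module
  refine ⟨t, hsplit ▸ PosDef.one.add_posSemidef ?_⟩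
  exact (hs.add (hrA.smul (by positivity))).add (PosSemidef.one.smul hst)

theorem PosDef.fromBlocks₂₂_of_schur {P : Matrix m m 𝕜} {Q : Matrix m p 𝕜} {R : Matrix p p 𝕜}
    (hR : R.PosDef) (hS : (P - Q * R⁻¹ * Qᴴ).PosDef) : (fromBlocks P Q Qᴴ R).PosDef := by
  let _ := hR.isUnit.invertible
  have hpsd := (PosDef.fromBlocks₂₂ P Q hR).2 hS.posSemidef
  rw [hpsd.posDef_iff_det_ne_zero, det_fromBlocks₂₂, invOf_eq_nonsing_inv]
  exact mul_ne_zero hR.det_pos.ne' hS.det_pos.ne'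

theorem exists_posDef_fromBlocks_add_smul [Nonempty m] {P A : Matrix m m 𝕜} (Q : Matrix m p 𝕜)
    {R : Matrix p p 𝕜} (hP : P.IsHermitian) (hA : A.PosDef) (hR : R.PosDef) :
    ∃ t : ℝ, (fromBlocks (P + t • A) Q Qᴴ R).PosDef := by
  have hS : (P - Q * R⁻¹ * Qᴴ).IsHermitian :=
    hP.sub (isHermitian_mul_mul_conjTranspose Q hR.inv.isHermitian)
  obtain ⟨t, ht⟩ := hS.exists_posDef_add_smul hA
  refine ⟨t, hR.fromBlocks₂₂_of_schur ?_⟩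
  convert ht using 1
  abel

theorem exists_posDef_add_smul_fromBlocks [Nonempty m] {M : Matrix (m ⊕ p) (m ⊕ p) 𝕜}
    (hM : M.IsHermitian) {A : Matrix m m 𝕜} (hA : A.PosDef) (hR : M.toBlocks₂₂.PosDef) :
    ∃ t : ℝ, (M + t • fromBlocks A 0 0 0).PosDef := by
  obtain ⟨hP, hQ, -, -⟩ := isHermitian_fromBlocks_iff.1 (M.fromBlocks_toBlocks ▸ hM)
  obtain ⟨t, ht⟩ := exists_posDef_fromBlocks_add_smul M.toBlocks₁₂ hP hA hR
  refine ⟨t, ?_⟩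
  rw [← M.fromBlocks_toBlocks, ← hQ, fromBlocks_smul, fromBlocks_add]
  simpa using ht

end PositiveDefinite

end Matrix

section Blocks

variable {n k : ℕ}

def finSplit (hkn : k ≤ n) : Fin k ⊕ Fin (n - k) ≃ Fin n :=
  finSumFinEquiv.trans (finCongr (Nat.add_sub_cancel' hkn))

theorem blk_eq_submatrix_s7 (hkn : k ≤ n) (u : MS n) :
    blk n k n u = u.submatrix (finSplit hkn ∘ Sum.inr) (finSplit hkn ∘ Sum.inr) := by
  ext i j
  exact dif_pos ⟨by omega, by omega⟩

theorem toBlocks₂₂_submatrix_finSplit (hkn : k ≤ n) (u : MS n) :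
    (u.submatrix (finSplit hkn) (finSplit hkn)).toBlocks₂₂ = blk n k n u := by
  rw [blk_eq_submatrix_s7]
  rfl

theorem staircase.submatrix_finSplit {x : MS n} (hkn : k ≤ n) (hx : staircase n 0 k x) :
    x.submatrix (finSplit hkn) (finSplit hkn) = fromBlocks (blk n 0 k x) 0 0 0 := by
  ext (i | i) (j | j)
  · simp only [submatrix_apply, fromBlocks_apply₁₁, blk]
    rw [dif_pos (by omega)]
    congr 1 <;> ext <;> simp [finSplit]
  all_goals exact hx.2 _ _ (Nat.zero_le _) (Nat.zero_le _) (by simp [finSplit])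

theorem injective_finSplit_inr (hkn : k ≤ n) : (finSplit hkn ∘ Sum.inr).Injective :=
  (finSplit hkn).injective.comp Sum.inr_injective

theorem Matrix.PosSemidef.blk (hkn : k ≤ n) {u : MS n} (hu : u.PosSemidef) :
    (blk n k n u).PosSemidef :=
  blk_eq_submatrix_s7 hkn u ▸ hu.submatrix _

theorem Matrix.PosDef.blk (hkn : k ≤ n) {u : MS n} (hu : u.PosDef) : (blk n k n u).PosDef :=
  blk_eq_submatrix_s7 hkn u ▸ hu.submatrix (injective_finSplit_inr hkn)

theorem Matrix.IsHermitian.blk (hkn : k ≤ n) {u : MS n} (hu : u.IsHermitian) :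
    (blk n k n u).IsHermitian :=
  blk_eq_submatrix_s7 hkn u ▸ hu.submatrix _

theorem blk_sub (hkn : k ≤ n) (u v : MS n) : blk n k n (u - v) = blk n k n u - blk n k n v := by
  simp only [blk_eq_submatrix_s7 hkn]
  rfl

theorem blk_add (hkn : k ≤ n) (u v : MS n) : blk n k n (u + v) = blk n k n u + blk n k n v := by
  simp only [blk_eq_submatrix_s7 hkn]
  rfl

theorem norm_blk_le (hkn : k ≤ n) (u : MS n) : ‖blk n k n u‖ ≤ ‖u‖ :=
  blk_eq_submatrix_s7 hkn u ▸ frobenius_norm_submatrix_le u (injective_finSplit_inr hkn)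
    (injective_finSplit_inr hkn)

def extendBlk (hkn : k ≤ n) (w : MS (n - k)) : MS n :=
  (fromBlocks 0 0 0 w).submatrix (finSplit hkn).symm (finSplit hkn).symm

theorem blk_extendBlk (hkn : k ≤ n) (w : MS (n - k)) : blk n k n (extendBlk hkn w) = w := by
  ext i j
  simp [blk_eq_submatrix_s7 hkn, extendBlk]

theorem norm_extendBlk_le (hkn : k ≤ n) (w : MS (n - k)) : ‖extendBlk hkn w‖ ≤ ‖w‖ :=
  (frobenius_norm_submatrix_le _ (finSplit hkn).symm.injective (finSplit hkn).symm.injective).trans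
    (frobenius_norm_fromBlocks_zero w).le

theorem Matrix.IsHermitian.extendBlk (hkn : k ≤ n) {w : MS (n - k)} (hw : w.IsHermitian) :
    (extendBlk hkn w).IsHermitian :=
  (isHermitian_fromBlocks_iff.2 ⟨isHermitian_zero, by simp, by simp, hw⟩).submatrix _

theorem exists_posDef_add_smul_of_staircase (hk : 0 < k) (hkn : k ≤ n) {u x : MS n}
    (hu : u.IsHermitian) (hx : staircase n 0 k x) (hblk : (blk n k n u).PosDef) :
    ∃ t : ℝ, (u + t • x).PosDef := by
  have : Nonempty (Fin k) := ⟨⟨0, hk⟩⟩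
  obtain ⟨t, ht⟩ := exists_posDef_add_smul_fromBlocks (hu.submatrix (finSplit hkn)) hx.1
    (by rwa [toBlocks₂₂_submatrix_finSplit])
  refine ⟨t, ?_⟩
  have hsub : (u + t • x).submatrix (finSplit hkn) (finSplit hkn) =
      u.submatrix (finSplit hkn) (finSplit hkn) + t • x.submatrix (finSplit hkn) (finSplit hkn) :=
    rfl
  rw [← hx.submatrix_finSplit hkn, ← hsub] at ht
  simpa using ht.submatrix (finSplit hkn).symm.injective

theorem exists_posDef_dist_add_smul_le (hk : 0 < k) (hkn : k ≤ n) {u x : MS n}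
    (hu : u.IsHermitian) (hx : staircase n 0 k x) {w : MS (n - k)} (hw : w.PosSemidef) {δ : ℝ}
    (hδ : 0 < δ) :
    ∃ t : ℝ, ∃ z : MS n, z.PosDef ∧
      dist z (u + t • x) ≤ dist w (blk n k n u) + δ * ‖(1 : MS (n - k))‖ := by
  set m := w - blk n k n u + δ • (1 : MS (n - k))
  have hm : m.IsHermitian :=
    (hw.isHermitian.sub (hu.blk hkn)).add (isHermitian_one.smul (IsSelfAdjoint.all δ))
  have hblk : (blk n k n (u + extendBlk hkn m)).PosDef := by
    have hsum : blk n k n u + m = δ • 1 + w := by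
      simp only [m]
      abel
    rw [blk_add hkn, blk_extendBlk, hsum]
    exact (PosDef.one.smul hδ).add_posSemidef hw
  obtain ⟨t, ht⟩ := exists_posDef_add_smul_of_staircase hk hkn (hu.add (hm.extendBlk hkn)) hx hblk
  refine ⟨t, _, ht, ?_⟩
  have : NormSMulClass ℝ (MS (n - k)) := frobeniusNormSMulClass
  calc dist (u + extendBlk hkn m + t • x) (u + t • x) = ‖extendBlk hkn m‖ := by
        rw [dist_eq_norm, add_right_comm, add_sub_cancel_left]
    _ ≤ ‖w - blk n k n u‖ + ‖δ • (1 : MS (n - k))‖ :=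
        (norm_extendBlk_le hkn m).trans (norm_add_le _ _)
    _ = dist w (blk n k n u) + δ * ‖(1 : MS (n - k))‖ := by
        rw [dist_eq_norm, norm_smul, Real.norm_of_nonneg hδ.le]

end Blocks

theorem sdist_eq_zero_iff {m : ℕ} {C D : Set (MS m)} (hC : C.Nonempty) (hD : D.Nonempty) :
    sdist C D = 0 ↔ ∀ ε > 0, ∃ c ∈ C, ∃ d ∈ D, dist c d < ε := by
  have hnonneg : ∀ r ∈ Set.image2 dist C D, 0 ≤ r :=
    Set.forall_mem_image2.2 fun _ _ _ _ => dist_nonneg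
  rw [sdist, ← (Real.sInf_nonneg hnonneg).ge_iff_eq',
    Real.sInf_le_iff ⟨0, hnonneg⟩ (hC.image2 hD)]
  simp

theorem weakStatus_iff {m : ℕ} {D : Set (MS m)} (hD : D.Nonempty) :
    weakStatus D ↔ (∀ ε > 0, ∃ c ∈ PSD m, ∃ d ∈ D, dist c d < ε) ∧ ¬ ∃ u ∈ D, u.PosDef := by
  rw [weakStatus, ← sdist_eq_zero_iff ⟨0, PosSemidef.zero⟩ hD]
  constructor
  · rintro (⟨⟨u, hu, hpsd⟩, hpd⟩ | ⟨hpsd, h0⟩)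
    · refine ⟨(sdist_eq_zero_iff ⟨0, PosSemidef.zero⟩ hD).2 fun ε hε => ?_, hpd⟩
      exact ⟨u, hpsd, u, hu, by simpa using hε⟩
    · exact ⟨h0, fun ⟨u, hu, hpd⟩ => hpsd ⟨u, hu, hpd.posSemidef⟩⟩
  · rintro ⟨h0, hpd⟩
    by_cases hfeas : ∃ u ∈ D, u.PosSemidef
    exacts [Or.inl ⟨hfeas, hpd⟩, Or.inr ⟨hfeas, h0⟩]

section Projection

variable {n k : ℕ} {D : Set (MS n)} {x : MS n}

theorem exists_posDef_iff_blk (hk : 0 < k) (hkn : k ≤ n) (hD : ∀ u ∈ D, u.IsHermitian)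
    (hDx : ∀ u ∈ D, ∀ t : ℝ, u + t • x ∈ D) (hx : staircase n 0 k x) :
    (∃ u ∈ D, u.PosDef) ↔ ∃ y ∈ blk n k n '' D, y.PosDef := by
  constructor
  · rintro ⟨u, hu, hpd⟩
    exact ⟨_, ⟨u, hu, rfl⟩, hpd.blk hkn⟩
  · rintro ⟨_, ⟨u, hu, rfl⟩, hpd⟩
    obtain ⟨t, ht⟩ := exists_posDef_add_smul_of_staircase hk hkn (hD u hu) hx hpd
    exact ⟨_, hDx u hu t, ht⟩

theorem approx_psd_iff_blk (hk : 0 < k) (hkn : k ≤ n) (hD : ∀ u ∈ D, u.IsHermitian)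
    (hDx : ∀ u ∈ D, ∀ t : ℝ, u + t • x ∈ D) (hx : staircase n 0 k x) :
    (∀ ε > 0, ∃ c ∈ PSD n, ∃ d ∈ D, dist c d < ε) ↔
      ∀ ε > 0, ∃ c ∈ PSD (n - k), ∃ d ∈ blk n k n '' D, dist c d < ε := by
  constructor
  · intro h ε hε
    obtain ⟨c, hc, d, hd, hcd⟩ := h ε hε
    refine ⟨blk n k n c, PosSemidef.blk hkn hc, _, ⟨d, hd, rfl⟩, ?_⟩
    rw [dist_eq_norm, ← blk_sub hkn]
    exact (norm_blk_le hkn _).trans_lt (dist_eq_norm c d ▸ hcd)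
  · intro h ε hε
    set δ := ε / (1 + ‖(1 : MS (n - k))‖)
    have hδ : 0 < δ := by positivity
    obtain ⟨w, hw, _, ⟨u, hu, rfl⟩, hwu⟩ := h δ hδ
    obtain ⟨t, z, hz, hdist⟩ := exists_posDef_dist_add_smul_le hk hkn (hD u hu) hx hw hδ
    refine ⟨z, hz.posSemidef, _, hDx u hu t, hdist.trans_lt ?_⟩
    calc dist w (blk n k n u) + δ * ‖(1 : MS (n - k))‖ < δ + δ * ‖(1 : MS (n - k))‖ := by
          gcongr
      _ = ε := by
          simp only [δ]
          field_simp

end Projection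

/-- If `L` contains a matrix `x = [[A, 0], [0, 0]]` with `A` a `k×k` positive definite
matrix (`0 < k ≤ n`), then `(K_n, L, c)` is in weak status iff the subproblem
`π̄_k(K_n, L, c) = (K_{n−k}, π̄_k(L), π̄_k(c))`, whose affine feasible set is
`π̄_k(L + c)`, is in weak status. -/
theorem stmt7 (n k : ℕ) (hk : 0 < k) (hkn : k ≤ n)
    (L : Submodule ℝ (MS n)) (hL : ∀ y ∈ L, y.IsSymm) (c : MS n) (hc : c.IsSymm)
    (x : MS n) (hxL : x ∈ L) (hx : staircase n 0 k x) :
    weakStatus (affSet L c) ↔ weakStatus (blk n k n '' affSet L c) := by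
  have hD : ∀ u ∈ affSet L c, u.IsHermitian := by
    rintro _ ⟨l, hl, rfl⟩
    exact isHermitian_iff_isSymm.2 ((hL l hl).add hc)
  have hDx : ∀ u ∈ affSet L c, ∀ t : ℝ, u + t • x ∈ affSet L c := by
    rintro _ ⟨l, hl, rfl⟩ t
    exact ⟨l + t • x, L.add_mem hl (L.smul_mem t hxL), by abel⟩
  have hne : (affSet L c).Nonempty := ⟨c, 0, L.zero_mem, (zero_add c).symm⟩
  rw [weakStatus_iff hne, weakStatus_iff (hne.image _), approx_psd_iff_blk hk hkn hD hDx hx,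
    exists_posDef_iff_blk hk hkn hD hDx hx]
end
end

section
/- Let 0 < k ≤ n, let D be a k×k positive definite matrix, and let x = [[D, 0],[0, 0]] ∈ S_n. Then the tangent cone of K_n at x, i.e. the closure of the cone of feasible directions dir(x,K_n) = {d ∈ S_n : ∃ t > 0 with x + t d ∈ K_n}, equals the set of all symmetric matrices d ∈ S_n whose lower-right (n−k)×(n−k) principal submatrix π̄_k(d) is positive semidefinite. -/
open Matrix

attribute [local instance] Matrix.frobeniusNormedAddCommGroup

noncomputable section

/-! The lower-right block of `x + t • d` is `t • π̄_k(d)`, so every feasible direction has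
`π̄_k(d)` positive semidefinite, a closed condition that passes to the closure. Conversely,
if `π̄_k(d)` is positive definite, write `d = [[A, B], [Bᵀ, G]]`; the Schur complement of
`t • G` in `x + t • d` is `D + t • (A - B G⁻¹ Bᵀ)`, which stays positive definite for small
`t > 0` because positive definiteness is an open condition. A general `d` is the limit of
`d + ε • 1`. -/

open Filter Topology

namespace Matrix

variable {m p : Type*}

lemma PosSemidef.of_smul {t : ℝ} (ht : 0 < t) {M : Matrix m m ℝ} (hM : (t • M).PosSemidef) :
    M.PosSemidef := by
  simpa [smul_smul, inv_mul_cancel₀ ht.ne'] using hM.smul (inv_nonneg.2 ht.le)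

lemma isClosed_setOf_isSymm {α : Type*} [TopologicalSpace α] [T2Space α] :
    IsClosed {M : Matrix m m α | M.IsSymm} :=
  isClosed_eq continuous_id.matrix_transpose continuous_id

variable [Fintype m]

lemma isClosed_setOf_posSemidef_s13 : IsClosed {M : Matrix m m ℝ | M.PosSemidef} := by
  have : {M : Matrix m m ℝ | M.PosSemidef} =
      {M | Mᴴ = M} ∩ ⋂ v : m → ℝ, {M | 0 ≤ star v ⬝ᵥ M *ᵥ v} := by
    ext M
    simp [posSemidef_iff_dotProduct_mulVec, IsHermitian]
  rw [this]
  exact (isClosed_eq continuous_id.matrix_conjTranspose continuous_id).inter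
    (isClosed_iInter fun v => isClosed_le continuous_const (by fun_prop))

lemma PosDef.eventually_posDef_add_smul {P C : Matrix m m ℝ} (hP : P.PosDef)
    (hC : C.IsHermitian) : ∀ᶠ t in 𝓝 (0 : ℝ), (P + t • C).PosDef := by
  -- Compactness of the unit sphere makes positivity near `t = 0` uniform; homogeneity of the
  -- quadratic form then extends it to all `v ≠ 0`.
  have hsphere : ∀ᶠ t in 𝓝 (0 : ℝ), ∀ u ∈ Metric.sphere (0 : m → ℝ) 1,
      0 < u ⬝ᵥ (P + t • C) *ᵥ u := by
    refine (isCompact_sphere 0 1).eventually_forall_of_forall_eventually fun u hu => ?_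
    have hu0 : u ≠ 0 := ne_zero_of_mem_sphere one_ne_zero ⟨u, hu⟩
    have h0 : 0 < u ⬝ᵥ (P + (0 : ℝ) • C) *ᵥ u := by
      simpa using hP.dotProduct_mulVec_pos hu0
    have hcont : Continuous fun z : ℝ × (m → ℝ) => z.2 ⬝ᵥ (P + z.1 • C) *ᵥ z.2 := by
      fun_prop
    exact hcont.continuousAt.eventually (lt_mem_nhds h0)
  filter_upwards [hsphere] with t ht
  refine .of_dotProduct_mulVec_pos (hP.1.add (hC.smul (.all t))) fun v hv => ?_
  have hr : 0 < ‖v‖ := norm_pos_iff.2 hv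
  have hu : ‖v‖⁻¹ • v ∈ Metric.sphere (0 : m → ℝ) 1 := by
    simp [norm_smul, hr.ne']
  have hv : v = ‖v‖ • ‖v‖⁻¹ • v := by rw [smul_smul, mul_inv_cancel₀ hr.ne', one_smul]
  rw [star_trivial, hv, mulVec_smul, smul_dotProduct, dotProduct_smul]
  exact mul_pos hr (mul_pos hr (ht _ hu))

variable [Fintype p] [DecidableEq p]

lemma exists_pos_posSemidef_fromBlocks_add_smul_fromBlocks {D A : Matrix m m ℝ}
    {G : Matrix p p ℝ} (B : Matrix m p ℝ) (hD : D.PosDef) (hA : A.IsHermitian) (hG : G.PosDef) :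
    ∃ t : ℝ, 0 < t ∧ (fromBlocks D 0 0 0 + t • fromBlocks A B Bᴴ G).PosSemidef := by
  have hschur := hD.eventually_posDef_add_smul
    (hA.sub (isHermitian_mul_mul_conjTranspose B hG.1.inv))
  obtain ⟨t, hpos, ht⟩ :=
    ((hschur.filter_mono nhdsWithin_le_nhds).and self_mem_nhdsWithin).exists (f := 𝓝[>] 0)
  refine ⟨t, ht, ?_⟩
  have htG : (t • G).PosDef := hG.smul ht
  have : Invertible (t • G) := htG.isUnit.invertible
  have hinv : (t • G)⁻¹ = t⁻¹ • G⁻¹ := inv_eq_left_inv <| by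
    rw [smul_mul_smul_comm, inv_mul_cancel₀ ht.ne', nonsing_inv_mul _ hG.det_pos.ne'.isUnit,
      one_smul]
  have htB : t • Bᴴ = (t • B)ᴴ := by rw [conjTranspose_smul, star_trivial]
  rw [fromBlocks_smul, fromBlocks_add, zero_add, zero_add, zero_add, htB,
    PosDef.fromBlocks₂₂ _ _ htG]
  have hcomplement :
      D + t • A - t • B * (t • G)⁻¹ * (t • B)ᴴ = D + t • (A - B * G⁻¹ * Bᴴ) := by
    simp only [hinv, ← htB, Matrix.smul_mul, Matrix.mul_smul, smul_smul,
      inv_mul_cancel₀ ht.ne', mul_one, smul_sub, add_sub_assoc]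
  exact hcomplement ▸ hpos.posSemidef

lemma exists_pos_posSemidef_fromBlocks_add_smul {D : Matrix m m ℝ}
    {M : Matrix (m ⊕ p) (m ⊕ p) ℝ} (hD : D.PosDef) (hM : M.IsHermitian)
    (hG : M.toBlocks₂₂.PosDef) :
    ∃ t : ℝ, 0 < t ∧ (fromBlocks D 0 0 0 + t • M).PosSemidef := by
  rw [← fromBlocks_toBlocks M] at hM ⊢
  obtain ⟨hA, hBC, -, -⟩ := isHermitian_fromBlocks_iff.1 hM
  rw [← hBC]
  exact exists_pos_posSemidef_fromBlocks_add_smul_fromBlocks _ hD hA hG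

end Matrix

lemma mem_closure_of_forall_pos_add_smul {E : Type*} [AddCommGroup E] [Module ℝ E]
    [TopologicalSpace E] [ContinuousAdd E] [ContinuousSMul ℝ E] {s : Set E} {d : E} (v : E)
    (h : ∀ ε : ℝ, 0 < ε → d + ε • v ∈ s) : d ∈ closure s := by
  have hlim : Tendsto (fun ε : ℝ => d + ε • v) (𝓝[>] 0) (𝓝 d) := by
    have hcont : Continuous fun ε : ℝ => d + ε • v := by fun_prop
    simpa using (hcont.tendsto 0).mono_left nhdsWithin_le_nhds
  exact mem_closure_of_tendsto hlim (eventually_mem_nhdsWithin.mono h)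

section Staircase

variable {n k : ℕ}

lemma blk_add_s13 (a b : ℕ) (x y : MS n) : blk n a b (x + y) = blk n a b x + blk n a b y := by
  ext i j
  simp only [blk, Matrix.add_apply]
  split <;> simp

lemma blk_smul (a b : ℕ) (c : ℝ) (x : MS n) : blk n a b (c • x) = c • blk n a b x := by
  ext i j
  simp only [blk, Matrix.smul_apply]
  split <;> simp

lemma blk_one {a b : ℕ} (hb : b ≤ n) : blk n a b 1 = 1 := by
  ext i j
  rw [blk, dif_pos (by omega)]
  simp [one_apply, Fin.ext_iff]

lemma continuous_blk (a b : ℕ) : Continuous (blk n a b) := by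
  refine continuous_pi fun i => continuous_pi fun j => ?_
  simp only [blk]
  split <;> fun_prop

def blockEquiv (hkn : k ≤ n) : Fin k ⊕ Fin (n - k) ≃ Fin n :=
  finSumFinEquiv.trans (finCongr (Nat.add_sub_cancel' hkn))

@[simp] lemma blockEquiv_inl (hkn : k ≤ n) (i : Fin k) :
    (blockEquiv hkn (.inl i) : ℕ) = i := by
  simp [blockEquiv]

@[simp] lemma blockEquiv_inr (hkn : k ≤ n) (j : Fin (n - k)) :
    (blockEquiv hkn (.inr j) : ℕ) = k + j := by
  simp [blockEquiv]

lemma toBlocks₁₁_submatrix_blockEquiv (hkn : k ≤ n) (M : MS n) :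
    (M.submatrix (blockEquiv hkn) (blockEquiv hkn)).toBlocks₁₁ = blk n 0 k M := by
  ext i j
  rw [blk, dif_pos (by omega)]
  show M (blockEquiv hkn (.inl i)) (blockEquiv hkn (.inl j)) = _
  congr <;> ext <;> simp

lemma toBlocks₂₂_submatrix_blockEquiv (hkn : k ≤ n) (M : MS n) :
    (M.submatrix (blockEquiv hkn) (blockEquiv hkn)).toBlocks₂₂ = blk n k n M := by
  ext i j
  rw [blk, dif_pos (by omega)]
  rfl

lemma staircase.submatrix_blockEquiv (hkn : k ≤ n) {x : MS n} (hx : staircase n 0 k x) :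
    x.submatrix (blockEquiv hkn) (blockEquiv hkn) = fromBlocks (blk n 0 k x) 0 0 0 := by
  rw [← fromBlocks_toBlocks (x.submatrix _ _), toBlocks₁₁_submatrix_blockEquiv]
  congr 1 <;> ext i j <;> exact hx.2 _ _ (Nat.zero_le _) (Nat.zero_le _) (by simp)

lemma staircase.blk_eq_zero (hkn : k ≤ n) {x : MS n} (hx : staircase n 0 k x) :
    blk n k n x = 0 := by
  rw [← toBlocks₂₂_submatrix_blockEquiv hkn, hx.submatrix_blockEquiv hkn,
    toBlocks_fromBlocks₂₂]

lemma staircase.exists_pos_posSemidef_add_smul (hkn : k ≤ n) {x d : MS n}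
    (hx : staircase n 0 k x) (hd : d.IsSymm) (hpd : (blk n k n d).PosDef) :
    ∃ t : ℝ, 0 < t ∧ (x + t • d).PosSemidef := by
  set e := blockEquiv hkn
  have hde : (d.submatrix e e).IsHermitian := isHermitian_iff_isSymm.2 (hd.submatrix e)
  obtain ⟨t, ht, hpsd⟩ := exists_pos_posSemidef_fromBlocks_add_smul hx.1 hde
    (by rwa [toBlocks₂₂_submatrix_blockEquiv])
  refine ⟨t, ht, (posSemidef_submatrix_equiv e).1 ?_⟩
  rwa [← hx.submatrix_blockEquiv hkn] at hpsd

end Staircase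

theorem stmt13_general (n k : ℕ) (hkn : k ≤ n)
    (x : MS n) (hx : staircase n 0 k x) :
    closure {d : MS n | d.IsSymm ∧ ∃ t : ℝ, 0 < t ∧ (x + t • d).PosSemidef}
      = {d : MS n | d.IsSymm ∧ (blk n k n d).PosSemidef} := by
  refine (closure_minimal ?_ (isClosed_setOf_isSymm.inter
    (isClosed_setOf_posSemidef_s13.preimage (continuous_blk k n)))).antisymm ?_
  · rintro d ⟨hd, t, ht, hpsd⟩
    have hlower : (blk n k n (x + t • d)).PosSemidef := by
      rw [← toBlocks₂₂_submatrix_blockEquiv hkn]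
      exact hpsd.submatrix _
    rw [blk_add_s13, blk_smul, hx.blk_eq_zero hkn, zero_add] at hlower
    exact ⟨hd, hlower.of_smul ht⟩
  · rintro d ⟨hd, hpsd⟩
    refine mem_closure_of_forall_pos_add_smul 1 fun ε hε => ?_
    have hdε : (d + ε • 1).IsSymm := hd.add (isSymm_one.smul ε)
    refine ⟨hdε, hx.exists_pos_posSemidef_add_smul hkn hdε ?_⟩
    rw [blk_add_s13, blk_smul, blk_one le_rfl]
    exact PosDef.posSemidef_add hpsd (PosDef.one.smul hε)

/-- For `x = [[D, 0], [0, 0]]` with `D` a `k×k` positive definite matrix (`0 < k ≤ n`),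
the tangent cone of `K_n` at `x` — the closure (in the Frobenius norm topology) of the
cone of feasible directions `{d ∈ S_n : ∃ t > 0, x + t d ∈ K_n}` — is exactly the set
of symmetric matrices `d` whose lower-right `(n−k)×(n−k)` principal submatrix
`π̄_k(d)` is positive semidefinite. -/
theorem stmt13 (n k : ℕ) (hk : 0 < k) (hkn : k ≤ n)
    (x : MS n) (hx : staircase n 0 k x) :
    closure {d : MS n | d.IsSymm ∧ ∃ t : ℝ, 0 < t ∧ (x + t • d).PosSemidef}
      = {d : MS n | d.IsSymm ∧ (blk n k n d).PosSemidef} :=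
  stmt13_general n k hkn x hx
end
end

section
/- Let x ∈ K_n and let d belong to the tangent cone of K_n at x, i.e. the closure of {e ∈ S_n : ∃ t > 0 with x + t e ∈ K_n}. Then lim_{t→+∞} dist(t x + d, K_n) = 0, where dist(y, K_n) = inf{‖y − z‖ : z ∈ K_n} in the Frobenius norm. -/
open Matrix

attribute [local instance] Matrix.frobeniusNormedAddCommGroup

noncomputable section

open Filter Metric Topology

/-! Only the cone structure of `K_n` matters. If `x + s • e ∈ K` with `s > 0`, then for `t ≥ s⁻¹`
the point `t • x + e = (t - s⁻¹) • x + s⁻¹ • (x + s • e)` lies in `K`, so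
`dist(t • x + d, K) ≤ ‖d - e‖` for all large `t`; and `e` can be chosen arbitrarily close to `d`. -/

namespace PointedCone

variable {E : Type*}

lemma smul_add_mem_of_add_smul_mem [AddCommGroup E] [Module ℝ E] (K : PointedCone ℝ E)
    {x e : E} (hx : x ∈ K) {s t : ℝ} (hs : 0 < s) (hxe : x + s • e ∈ K) (hst : s⁻¹ ≤ t) :
    t • x + e ∈ K := by
  have hdecomp : t • x + e = (t - s⁻¹) • x + s⁻¹ • (x + s • e) := by
    rw [smul_add, smul_smul, inv_mul_cancel₀ hs.ne', one_smul, sub_smul]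
    abel
  rw [hdecomp]
  exact K.add_mem (K.smul_mem (sub_nonneg.mpr hst) hx) (K.smul_mem (inv_nonneg.mpr hs.le) hxe)

theorem tendsto_infDist_smul_add_atTop [SeminormedAddCommGroup E] [Module ℝ E]
    (K : PointedCone ℝ E) {x d : E} (hx : x ∈ K)
    (hd : d ∈ closure {e | ∃ s : ℝ, 0 < s ∧ x + s • e ∈ K}) :
    Tendsto (fun t : ℝ => infDist (t • x + d) K) atTop (𝓝 0) := by
  rw [Metric.tendsto_atTop]
  intro ε hε
  obtain ⟨e, ⟨s, hs, hxe⟩, hde⟩ := Metric.mem_closure_iff.mp hd ε hε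
  refine ⟨s⁻¹, fun t ht => ?_⟩
  calc dist (infDist (t • x + d) K) 0 = infDist (t • x + d) K := by
        rw [Real.dist_0_eq_abs, abs_of_nonneg infDist_nonneg]
    _ ≤ dist (t • x + d) (t • x + e) :=
        infDist_le_dist_of_mem (K.smul_add_mem_of_add_smul_mem hx hs hxe ht)
    _ = dist d e := dist_add_left _ _ _
    _ < ε := hde

end PointedCone

def psdCone (n : ℕ) : PointedCone ℝ (MS n) where
  carrier := PSD n
  add_mem' := PosSemidef.add
  zero_mem' := PosSemidef.zero
  smul_mem' c _ hx := hx.smul c.2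

/-- If `x ∈ K_n` and `d` belongs to the tangent cone of `K_n` at `x`, i.e. to the
closure (in the Frobenius norm topology) of `{e ∈ S_n : ∃ t > 0, x + t e ∈ K_n}`,
then `dist(t x + d, K_n) → 0` as `t → +∞`. -/
theorem stmt14 (n : ℕ) (x : MS n) (hx : x.PosSemidef) (d : MS n)
    (hd : d ∈ closure {e : MS n | e.IsSymm ∧ ∃ t : ℝ, 0 < t ∧ (x + t • e).PosSemidef}) :
    Filter.Tendsto (fun t : ℝ => Metric.infDist (t • x + d) (PSD n))
      Filter.atTop (nhds 0) :=
  (psdCone n).tendsto_infDist_smul_add_atTop hx (closure_mono (fun _ he => he.2) hd)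
end
end

section
/- Let L+c ⊆ S_3 be the affine set of all matrices [[t, 1, s],[1, s, 1],[s, 1, 0]] with t, s ∈ ℝ (so L is the span of A₁ = [[1,0,0],[0,0,0],[0,0,0]] and A₂ = [[0,0,1],[0,1,0],[1,0,0]]). Then: (i) (L+c) ∩ K_3 = ∅ and dist(K_3, L+c) = 0, i.e. the problem is weakly infeasible; and (ii) the problem is not directionally weakly infeasible: for every nonzero d ∈ L ∩ K_3 and every x ∈ L+c there exists δ > 0 such that dist(x + t d, K_3) ≥ δ for all t ≥ 0; in particular dist(x + t d, K_3) does not tend to 0 as t → +∞. -/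
/-!
For `v = (0, 1, -(s + 1) / 2)` every `x = [[t,1,s],[1,s,1],[s,1,0]]` of `L + c` has
`vᵀ x v = -1`, whereas `vᵀ z v ≥ 0` for PSD `z` and `|vᵀ M v| ≤ ‖v‖² ‖M‖`; hence
`dist(x, K₃) ≥ 1 / (1 + ((s + 1) / 2) ^ 2)`, a bound independent of `t`. The PSD matrices of `L`
are the multiples of `A₁`, which only move `t`, so this bound holds along every ray `x + t d`.
On the other hand, replacing the zero corner by `r²` gives, for suitable `t` and `s = 2 / r²`,
a Gram matrix, so `L + c` comes arbitrarily close to `K₃`.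
-/

open Matrix

attribute [local instance] Matrix.frobeniusNormedAddCommGroup

noncomputable section

/-- The affine set `L + c` of all matrices `[[t,1,s],[1,s,1],[s,1,0]]`, `t, s ∈ ℝ`. -/
def exAff : Set (MS 3) :=
  {x | ∃ t s : ℝ, x = !![t, 1, s; 1, s, 1; s, 1, 0]}

/-- The subspace `L` spanned by `A₁ = [[1,0,0],[0,0,0],[0,0,0]]` and
`A₂ = [[0,0,1],[0,1,0],[1,0,0]]`. -/
def exL : Submodule ℝ (MS 3) :=
  Submodule.span ℝ {!![1, 0, 0; 0, 0, 0; 0, 0, 0], !![0, 0, 1; 0, 1, 0; 1, 0, 0]}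

namespace Matrix

variable {m n : Type*} [Fintype m] [Fintype n]

theorem norm_apply_le_frobenius_norm {α : Type*} [NormedAddCommGroup α]
    (A : Matrix m n α) (i : m) (j : n) : ‖A i j‖ ≤ ‖A‖ :=
  (PiLp.norm_apply_le (WithLp.toLp 2 (A i)) j).trans
    (PiLp.norm_apply_le (WithLp.toLp 2 fun i ↦ WithLp.toLp 2 (A i)) i)

theorem abs_dotProduct_mulVec_le_frobenius_norm (M : Matrix n n ℝ) (v : n → ℝ) :
    |v ⬝ᵥ M *ᵥ v| ≤ ‖WithLp.toLp 2 v‖ ^ 2 * ‖M‖ := by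
  have hquad : v ⬝ᵥ M *ᵥ v = (replicateRow Unit v * M * replicateCol Unit v) () () := by
    rw [Matrix.mul_assoc, ← replicateCol_mulVec, replicateRow_mul_replicateCol_apply]
  calc |v ⬝ᵥ M *ᵥ v| ≤ ‖replicateRow Unit v * M * replicateCol Unit v‖ := by
        rw [hquad, ← Real.norm_eq_abs]; exact norm_apply_le_frobenius_norm _ () ()
    _ ≤ ‖replicateRow Unit v‖ * ‖M‖ * ‖replicateCol Unit v‖ :=
        (frobenius_norm_mul _ _).trans (by gcongr; exact frobenius_norm_mul _ _)
    _ = ‖WithLp.toLp 2 v‖ ^ 2 * ‖M‖ := by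
        rw [frobenius_norm_replicateRow, frobenius_norm_replicateCol]; ring

theorem PosSemidef.neg_dotProduct_mulVec_le {y z : Matrix n n ℝ} (hz : z.PosSemidef)
    (v : n → ℝ) : -(v ⬝ᵥ y *ᵥ v) ≤ ‖WithLp.toLp 2 v‖ ^ 2 * dist y z := by
  have hz' : 0 ≤ v ⬝ᵥ z *ᵥ v := by simpa using hz.dotProduct_mulVec_nonneg v
  have hdiff := abs_dotProduct_mulVec_le_frobenius_norm (z - y) v
  rw [sub_mulVec, dotProduct_sub] at hdiff
  rw [dist_eq_norm']
  linarith [le_abs_self (v ⬝ᵥ z *ᵥ v - v ⬝ᵥ y *ᵥ v)]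

theorem frobenius_norm_single [DecidableEq m] [DecidableEq n] (i : m) (j : n) (c : ℝ) :
    ‖single i j c‖ = |c| := by
  rw [frobenius_norm_def, ← Real.sqrt_eq_rpow]
  simp [single_apply, ite_and, Real.sqrt_sq_eq_abs]

end Matrix

theorem neg_dotProduct_mulVec_div_le_infDist {n : ℕ} (y : MS n) (v : Fin n → ℝ) :
    -(v ⬝ᵥ y *ᵥ v) / ‖WithLp.toLp 2 v‖ ^ 2 ≤ Metric.infDist y (PSD n) :=
  (Metric.le_infDist ⟨0, PosSemidef.zero⟩).2 fun _ hz ↦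
    div_le_of_le_mul₀ (by positivity) dist_nonneg <| by
      rw [mul_comm]; exact hz.neg_dotProduct_mulVec_le v

theorem sdist_eq_zero_of_forall_exists_dist_le {n : ℕ} {C D : Set (MS n)}
    (h : ∀ ε > 0, ∃ x ∈ C, ∃ y ∈ D, dist x y ≤ ε) : sdist C D = 0 := by
  have hnonneg : ∀ r ∈ Set.image2 dist C D, 0 ≤ r := by
    rintro _ ⟨x, -, y, -, rfl⟩; exact dist_nonneg
  refine le_antisymm (le_of_forall_pos_le_add fun ε hε ↦ ?_) (Real.sInf_nonneg hnonneg)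
  obtain ⟨x, hx, y, hy, hxy⟩ := h ε hε
  rw [zero_add]
  exact (csInf_le ⟨0, hnonneg⟩ (Set.mem_image2_of_mem hx hy)).trans hxy

def exMat (t s : ℝ) : MS 3 := !![t, 1, s; 1, s, 1; s, 1, 0]

theorem mem_exAff {x : MS 3} : x ∈ exAff ↔ ∃ t s, x = exMat t s := Iff.rfl

theorem dotProduct_exMat_mulVec (t s : ℝ) :
    ![0, 1, -(s + 1) / 2] ⬝ᵥ exMat t s *ᵥ ![0, 1, -(s + 1) / 2] = -1 := by
  simp [exMat, dotProduct, mulVec, Fin.sum_univ_three]; ring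

theorem not_posSemidef_exMat (t s : ℝ) : ¬ (exMat t s).PosSemidef := fun h ↦ by
  have := h.dotProduct_mulVec_nonneg ![0, 1, -(s + 1) / 2]
  simp only [star_trivial, dotProduct_exMat_mulVec] at this
  norm_num at this

theorem inv_le_infDist_exMat (t s : ℝ) :
    (1 + ((s + 1) / 2) ^ 2)⁻¹ ≤ Metric.infDist (exMat t s) (PSD 3) := by
  have hv : ‖WithLp.toLp 2 ![(0 : ℝ), 1, -(s + 1) / 2]‖ ^ 2 = 1 + ((s + 1) / 2) ^ 2 := by
    rw [EuclideanSpace.norm_sq_eq]; simp [Fin.sum_univ_three]; ring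
  have := neg_dotProduct_mulVec_div_le_infDist (exMat t s) ![0, 1, -(s + 1) / 2]
  rwa [dotProduct_exMat_mulVec, hv, neg_neg, one_div] at this

theorem exMat_add_smul (t s a : ℝ) :
    exMat t s + a • !![1, 0, 0; 0, 0, 0; 0, 0, 0] = exMat (t + a) s := by
  ext i j; fin_cases i <;> fin_cases j <;> simp [exMat]

theorem exists_eq_smul_of_mem_exL {d : MS 3} (hd : d ∈ exL) (hpsd : d.PosSemidef) :
    ∃ a : ℝ, d = a • !![1, 0, 0; 0, 0, 0; 0, 0, 0] := by
  obtain ⟨a, b, rfl⟩ := Submodule.mem_span_pair.1 hd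
  have hquad : ∀ c : ℝ, 0 ≤ a + 2 * b * c := fun c ↦ by
    have := hpsd.dotProduct_mulVec_nonneg ![1, 0, c]
    simp [dotProduct, mulVec, Fin.sum_univ_three] at this; linarith
  obtain rfl : b = 0 := by
    by_contra hb
    have := hquad (-(a + 1) / (2 * b))
    field_simp at this; linarith
  exact ⟨a, by simp⟩

theorem exists_posSemidef_dist_exAff_eq {r : ℝ} (hr : 0 < r) :
    ∃ z ∈ PSD 3, ∃ y ∈ exAff, dist z y = r ^ 2 := by
  -- the rows of `B` have Gram matrix `exMat t (2 / r ^ 2)`, up to the corner entry `r ^ 2`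
  set B : Matrix (Fin 3) (Fin 2) ℝ := !![2 / r ^ 3, r - 2 / r ^ 3; 1 / r, 1 / r; r, 0]
  refine ⟨B * Bᴴ, posSemidef_self_mul_conjTranspose B,
    exMat ((2 / r ^ 3) ^ 2 + (r - 2 / r ^ 3) ^ 2) (2 / r ^ 2), ⟨_, _, rfl⟩, ?_⟩
  have hcorner : B * Bᴴ - exMat ((2 / r ^ 3) ^ 2 + (r - 2 / r ^ 3) ^ 2) (2 / r ^ 2)
      = single 2 2 (r ^ 2) := by
    ext i j
    fin_cases i <;> fin_cases j <;>
      · simp only [Matrix.sub_apply, mul_apply, conjTranspose_apply, Fin.sum_univ_two]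
        simp [B, exMat]
        try field_simp
        try ring
  rw [dist_eq_norm, hcorner, frobenius_norm_single, abs_of_nonneg (sq_nonneg r)]

/-- The problem `(K_3, L, c)` of Example 2 is weakly infeasible:
(i) `(L+c) ∩ K_3 = ∅` and `dist(K_3, L+c) = 0`; and (ii) it is not directionally
weakly infeasible: for every nonzero `d ∈ L ∩ K_3` and every `x ∈ L + c` there is
`δ > 0` with `dist(x + t d, K_3) ≥ δ` for all `t ≥ 0`; in particular
`dist(x + t d, K_3)` does not tend to `0` as `t → +∞`. -/
theorem stmt19 :
    ((¬ ∃ x ∈ exAff, x.PosSemidef) ∧ sdist (PSD 3) exAff = 0) ∧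
      (∀ d : MS 3, d ∈ exL → d.PosSemidef → d ≠ 0 → ∀ x ∈ exAff,
        (∃ δ : ℝ, 0 < δ ∧ ∀ t : ℝ, 0 ≤ t → δ ≤ Metric.infDist (x + t • d) (PSD 3)) ∧
          ¬ Filter.Tendsto (fun t : ℝ => Metric.infDist (x + t • d) (PSD 3))
            Filter.atTop (nhds 0)) := by
  refine ⟨⟨?_, ?_⟩, fun d hdL hdP _ x hx ↦ ?_⟩
  · rintro ⟨x, hx, hpsd⟩
    obtain ⟨t, s, rfl⟩ := mem_exAff.1 hx
    exact not_posSemidef_exMat t s hpsd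
  · refine sdist_eq_zero_of_forall_exists_dist_le fun ε hε ↦ ?_
    obtain ⟨z, hz, y, hy, hzy⟩ := exists_posSemidef_dist_exAff_eq (Real.sqrt_pos.2 hε)
    exact ⟨z, hz, y, hy, (hzy.trans (Real.sq_sqrt hε.le)).le⟩
  · obtain ⟨a, rfl⟩ := exists_eq_smul_of_mem_exL hdL hdP
    obtain ⟨t₀, s, rfl⟩ := mem_exAff.1 hx
    have hδ : 0 < (1 + ((s + 1) / 2) ^ 2)⁻¹ := by positivity
    have hbound : ∀ t : ℝ, (1 + ((s + 1) / 2) ^ 2)⁻¹ ≤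
        Metric.infDist (exMat t₀ s + t • a • !![1, 0, 0; 0, 0, 0; 0, 0, 0]) (PSD 3) := by
      intro t
      rw [smul_smul, exMat_add_smul]
      exact inv_le_infDist_exMat _ _
    exact ⟨⟨_, hδ, fun t _ ↦ hbound t⟩,
      fun h ↦ hδ.not_ge (ge_of_tendsto h (Filter.Eventually.of_forall hbound))⟩
end
end
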